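/- arXiv:math/9302209 — 5 statements merged into one kernel-verified Lean document; each statement's English description precedes it below -/
import Mathlib

section
/- (Rockafellar) Let T : E → 2^{E*} be maximal monotone on a real Banach space E and suppose the interior of the convex hull of D(T) is nonempty. Then int D(T) = int(co D(T)) (in particular int D(T) is convex), T is locally bounded at each point of int D(T), and the closure of D(T) equals the closure of int D(T), hence is convex. -/
/-!
Fix `x` in the interior of `co D(T)` and look at the graph of `T` from `x`: the triples
`(v, g, g v)` with `g ∈ T (x + v)`. For two such triples monotonicity reads
`h v + g w ≤ g v + h w`, an inequality that is affine in each triple and therefore holds on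
their convex hull `H`. The first coordinates of `H` cover a ball around `0`, so by Baire the
closure of the first coordinates of the triples `(w, h, r) ∈ H` with `‖h‖ ≤ C`, `r ≤ C`
contains a ball `closedBall 0 ρ`. Testing `(v, g, s) ∈ H` against this ball bounds `‖g‖` in
terms of `s` and `‖v‖`, which gives local boundedness, and yields `-s ≤ (C / ρ) ‖v‖` on `H`.
By Hahn–Banach there is then `f` with `f v ≤ s` on `H`, i.e. `f` is monotonically related to
the graph of `T` at `x`, so `f ∈ T x` by maximality. Hence `int (co D(T)) ⊆ D(T)`, and the rest
is convex geometry.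
-/

open Set Metric Topology

theorem exists_inter_interior_closure_nonempty_of_subset_iUnion {X : Type*}
    [TopologicalSpace X] [BaireSpace X] {U : Set X} (hU : IsOpen U) (hne : U.Nonempty)
    {A : ℕ → Set X} (hcover : U ⊆ ⋃ n, A n) : ∃ n, (U ∩ interior (closure (A n))).Nonempty := by
  set F : ℕ → Set X := fun n => closure (A n) ∪ Uᶜ
  have hF : ⋃ n, F n = univ := by
    refine eq_univ_of_forall fun y => ?_
    by_cases hy : y ∈ U
    · obtain ⟨n, hn⟩ := mem_iUnion.1 (hcover hy)
      exact mem_iUnion.2 ⟨n, Or.inl (subset_closure hn)⟩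
    · exact mem_iUnion.2 ⟨0, Or.inr hy⟩
  obtain ⟨y, hyU, hy⟩ := (dense_iUnion_interior_of_closed
    (fun n => isClosed_closure.union hU.isClosed_compl) hF).inter_open_nonempty U hU hne
  obtain ⟨n, hn⟩ := mem_iUnion.1 hy
  refine ⟨n, y, hyU, interior_maximal ?_ (isOpen_interior.inter hU) ⟨hn, hyU⟩⟩
  rintro z ⟨hzF, hzU⟩
  exact (interior_subset hzF).resolve_right (not_not_intro hzU)

theorem nonpos_of_forall_pos_mul_lt {y u : ℝ} (h : ∀ t : ℝ, 0 < t → t * y < u) : y ≤ 0 := by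
  by_contra! hy
  have := h ((|u| + 1) / y) (by positivity)
  rw [div_mul_cancel₀ _ hy.ne'] at this
  linarith [le_abs_self u]

theorem exists_dual_nonpos_nonneg_of_disjoint_convexConeHull {F : Type*} [TopologicalSpace F]
    [AddCommGroup F] [Module ℝ F] [IsTopologicalAddGroup F] [ContinuousSMul ℝ F]
    {A K : Set F} (hA_open : IsOpen A) (hA_conv : Convex ℝ A)
    (hA_cone : ∀ a ∈ A, ∀ t : ℝ, 0 < t → t • a ∈ A) (hA : A.Nonempty) (hK : K.Nonempty)
    (hdisj : Disjoint A (ConvexCone.hull ℝ K)) :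
    ∃ L : StrongDual ℝ F, L ≠ 0 ∧ (∀ a ∈ A, L a ≤ 0) ∧ ∀ k ∈ K, 0 ≤ L k := by
  obtain ⟨L, u, hLA, hLK⟩ :=
    geometric_hahn_banach_open hA_conv hA_open (ConvexCone.hull ℝ K).convex hdisj
  obtain ⟨a₀, ha₀⟩ := hA
  obtain ⟨k₀, hk₀⟩ := hK
  have hu : u ≤ L k₀ := hLK k₀ (ConvexCone.subset_hull hk₀)
  refine ⟨L, fun hL => ?_, fun a ha => ?_, fun k hk => ?_⟩
  · linarith [hLA a₀ ha₀, show L a₀ = L k₀ by simp [hL]]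
  · refine nonpos_of_forall_pos_mul_lt (u := L k₀) fun t ht => ?_
    have := hLA (t • a) (hA_cone a ha t ht)
    rw [map_smul, smul_eq_mul] at this
    linarith
  · refine neg_nonpos.1 (nonpos_of_forall_pos_mul_lt (u := -u + 1) fun t ht => ?_)
    have := hLK (t • k) ((ConvexCone.hull ℝ K).smul_mem ht (ConvexCone.subset_hull hk))
    rw [map_smul, smul_eq_mul] at this
    linarith

theorem exists_dual_le_of_convex {E : Type*} [NormedAddCommGroup E] [NormedSpace ℝ E]
    {K : Set (E × ℝ)} (hK : Convex ℝ K) (R : ℝ) (hR : ∀ k ∈ K, -k.2 ≤ R * ‖k.1‖) :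
    ∃ f : StrongDual ℝ E, ∀ k ∈ K, f k.1 ≤ k.2 := by
  rcases K.eq_empty_or_nonempty with rfl | hK₀
  · exact ⟨0, by simp⟩
  set R' := max R 0
  set A : Set (E × ℝ) := {a | a.2 + R' * ‖a.1‖ < 0}
  have hA_conv : Convex ℝ A := by
    simpa [A] using (((LinearMap.snd ℝ E ℝ).convexOn convex_univ).add
      (((convexOn_norm convex_univ).comp_linearMap (LinearMap.fst ℝ E ℝ)).smul
        (le_max_right R 0))).convex_lt 0
  have hA_cone : ∀ a ∈ A, ∀ t : ℝ, 0 < t → t • a ∈ A := fun a ha t ht => by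
    simp only [A, mem_ofPred_eq, Prod.smul_fst, Prod.smul_snd, smul_eq_mul, norm_smul,
      Real.norm_of_nonneg ht.le] at ha ⊢
    nlinarith
  have hdisj : Disjoint A (ConvexCone.hull ℝ K) := by
    refine disjoint_left.2 fun a ha hcone => ?_
    obtain ⟨c, hc, k, hk, rfl⟩ := (ConvexCone.mem_hull_of_convex hK).1 hcone
    have hk' : 0 ≤ k.2 + R' * ‖k.1‖ := by nlinarith [hR k hk, le_max_left R 0, norm_nonneg k.1]
    simp only [A, mem_ofPred_eq, Prod.smul_fst, Prod.smul_snd, smul_eq_mul, norm_smul,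
      Real.norm_of_nonneg hc.le] at ha
    nlinarith [mul_nonneg hc.le hk']
  obtain ⟨L, hL0, hLA, hLK⟩ := exists_dual_nonpos_nonneg_of_disjoint_convexConeHull
    (isOpen_lt (by fun_prop) continuous_const) hA_conv hA_cone ⟨(0, -1), by simp⟩ hK₀ hdisj
  set ℓ := L.comp (ContinuousLinearMap.inl ℝ E ℝ)
  set c := L (0, 1)
  have hL : ∀ a : E × ℝ, L a = ℓ a.1 + a.2 * c := fun a => by
    have ha : a = (a.1, 0) + a.2 • ((0 : E), (1 : ℝ)) := by ext <;> simp
    rw [ha, map_add, map_smul, smul_eq_mul]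
    simp [ℓ, c]
  have hℓ : ∀ v, ℓ v ≤ (R' * ‖v‖ + 1) * c := fun v => by
    have := hLA (v, -(R' * ‖v‖ + 1)) (by simp)
    rw [hL] at this
    linarith
  -- a vertical separating hyperplane would have to vanish
  have hc : 0 < c := by
    refine lt_of_le_of_ne (by simpa using hℓ 0) fun hc0 => hL0 ?_
    have hℓ0 : ∀ v, ℓ v = 0 := fun v => le_antisymm (by simpa [← hc0] using hℓ v)
      (by simpa [← hc0] using hℓ (-v))
    refine ContinuousLinearMap.ext fun a => ?_
    rw [hL, hℓ0, ← hc0]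
    simp
  refine ⟨-c⁻¹ • ℓ, fun k hk => ?_⟩
  have := hLK k hk
  rw [hL] at this
  rw [smul_apply, smul_eq_mul, neg_mul, neg_le, ← div_eq_inv_mul, le_div_iff₀ hc]
  linarith

namespace Rockafellar

variable {E : Type*} [NormedAddCommGroup E] [NormedSpace ℝ E]

/-- The graph of `T` translated to `x`, with `g v` recorded as a third coordinate: in the convex
hull this coordinate becomes an upper bound for `g v` that still controls the monotonicity
inequality, which is affine in each argument. -/
def anchoredGraph (T : E → Set (StrongDual ℝ E)) (x : E) : Set (E × StrongDual ℝ E × ℝ) :=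
  {p | p.2.1 ∈ T (x + p.1) ∧ p.2.2 = p.2.1 p.1}

def anchoredSublevel (T : E → Set (StrongDual ℝ E)) (x : E) (C : ℝ) : Set E :=
  {v | ∃ p ∈ convexHull ℝ (anchoredGraph T x), p.1 = v ∧ ‖p.2.1‖ ≤ C ∧ p.2.2 ≤ C}

variable {T : E → Set (StrongDual ℝ E)} {x : E}

theorem convex_setOf_pairing_le (q : E × StrongDual ℝ E × ℝ) :
    Convex ℝ {p : E × StrongDual ℝ E × ℝ | q.2.1 p.1 + p.2.1 q.1 ≤ p.2.2 + q.2.2} := by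
  have hlin : IsLinearMap ℝ fun p : E × StrongDual ℝ E × ℝ => q.2.1 p.1 + p.2.1 q.1 - p.2.2 :=
    ⟨fun a b => by simp only [Prod.fst_add, Prod.snd_add, map_add, add_apply]; ring,
     fun c a => by
      simp only [Prod.smul_fst, Prod.smul_snd, map_smul, smul_apply, smul_eq_mul]; ring⟩
  simpa only [sub_le_iff_le_add'] using convex_halfSpace_le hlin q.2.2

theorem pairing_le_of_mem_convexHull
    (hmono : ∀ x y x' y', x' ∈ T x → y' ∈ T y → 0 ≤ (x' - y') (x - y))
    {p q : E × StrongDual ℝ E × ℝ} (hp : p ∈ convexHull ℝ (anchoredGraph T x))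
    (hq : q ∈ convexHull ℝ (anchoredGraph T x)) :
    q.2.1 p.1 + p.2.1 q.1 ≤ p.2.2 + q.2.2 := by
  have hgraph : ∀ p ∈ anchoredGraph T x, ∀ q ∈ anchoredGraph T x,
      q.2.1 p.1 + p.2.1 q.1 ≤ p.2.2 + q.2.2 := by
    rintro p ⟨hg, hs⟩ q ⟨hh, hr⟩
    have := hmono _ _ _ _ hg hh
    simp only [sub_apply, add_sub_add_left_eq_sub, map_sub] at this
    linarith
  have hleft : ∀ q ∈ anchoredGraph T x, ∀ p ∈ convexHull ℝ (anchoredGraph T x),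
      q.2.1 p.1 + p.2.1 q.1 ≤ p.2.2 + q.2.2 := fun q hq =>
    convexHull_min (fun p hp => hgraph p hp q hq) (convex_setOf_pairing_le q)
  have hright : convexHull ℝ (anchoredGraph T x) ⊆
      {q | p.2.1 q.1 + q.2.1 p.1 ≤ q.2.2 + p.2.2} :=
    convexHull_min (fun q hq => by have := hleft q hq p hp; simp only [mem_ofPred_eq]; linarith)
      (convex_setOf_pairing_le p)
  have := hright hq
  simp only [mem_ofPred_eq] at this
  linarith

theorem apply_fst_le_of_mem_convexHull
    (hmono : ∀ x y x' y', x' ∈ T x → y' ∈ T y → 0 ≤ (x' - y') (x - y))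
    {p : E × StrongDual ℝ E × ℝ} (hp : p ∈ convexHull ℝ (anchoredGraph T x)) :
    p.2.1 p.1 ≤ p.2.2 := by
  linarith [pairing_le_of_mem_convexHull hmono hp hp]

theorem mem_fst_image_convexHull_of_mem_convexHull {y : E}
    (hy : y ∈ convexHull ℝ {z | (T z).Nonempty}) :
    y - x ∈ Prod.fst '' convexHull ℝ (anchoredGraph T x) := by
  have hconv : Convex ℝ ((· + -x) ⁻¹' (Prod.fst '' convexHull ℝ (anchoredGraph T x))) :=
    ((convex_convexHull ℝ _).linear_image (LinearMap.fst ℝ E _)).translate_preimage_left (-x)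
  rw [sub_eq_add_neg]
  refine convexHull_min ?_ hconv hy
  rintro z ⟨g, hg⟩
  exact ⟨(z - x, g, g (z - x)), subset_convexHull ℝ _ ⟨by simpa using hg, rfl⟩,
    sub_eq_add_neg z x⟩

theorem convex_anchoredSublevel (C : ℝ) : Convex ℝ (anchoredSublevel T x C) := by
  rintro _ ⟨p, hp, rfl, hpg, hps⟩ _ ⟨q, hq, rfl, hqg, hqs⟩ a b ha hb hab
  refine ⟨a • p + b • q, convex_convexHull ℝ _ hp hq ha hb hab, rfl, ?_, ?_⟩
  · calc ‖a • p.2.1 + b • q.2.1‖ ≤ a * ‖p.2.1‖ + b * ‖q.2.1‖ := by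
          simpa [norm_smul, abs_of_nonneg ha, abs_of_nonneg hb] using
            norm_add_le (a • p.2.1) (b • q.2.1)
      _ ≤ a * C + b * C := by gcongr
      _ = C := by rw [← add_mul, hab, one_mul]
  · calc a * p.2.2 + b * q.2.2 ≤ a * C + b * C := by gcongr
      _ = C := by rw [← add_mul, hab, one_mul]

theorem anchoredSublevel_mono : Monotone (anchoredSublevel T x) :=
  fun _ _ hCD _ ⟨p, hp, hpv, hpg, hps⟩ => ⟨p, hp, hpv, hpg.trans hCD, hps.trans hCD⟩

theorem apply_le_of_mem_closure_anchoredSublevel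
    (hmono : ∀ x y x' y', x' ∈ T x → y' ∈ T y → 0 ≤ (x' - y') (x - y))
    {p : E × StrongDual ℝ E × ℝ} (hp : p ∈ convexHull ℝ (anchoredGraph T x)) {C : ℝ} {w : E}
    (hw : w ∈ closure (anchoredSublevel T x C)) :
    p.2.1 w ≤ p.2.2 + C * (1 + ‖p.1‖) := by
  refine closure_minimal ?_ (isClosed_le p.2.1.continuous continuous_const) hw
  rintro _ ⟨q, hq, rfl, hqg, hqs⟩
  have hpair := pairing_le_of_mem_convexHull hmono hp hq
  have hqp : -(q.2.1 p.1) ≤ C * ‖p.1‖ :=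
    (neg_le_abs _).trans ((q.2.1.le_opNorm p.1).trans (by gcongr))
  simp only [mem_ofPred_eq]
  linarith

theorem exists_closedBall_subset_closure_anchoredSublevel [CompleteSpace E]
    (hx : x ∈ interior (convexHull ℝ {z | (T z).Nonempty})) :
    ∃ C ρ : ℝ, 0 ≤ C ∧ 0 < ρ ∧ ρ ≤ 1 ∧
      closedBall 0 ρ ⊆ closure (anchoredSublevel T x C) := by
  obtain ⟨ε, hε, hball⟩ := Metric.isOpen_iff.1 isOpen_interior x hx
  have hcover : ball (0 : E) ε ⊆ ⋃ n : ℕ, anchoredSublevel T x n := by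
    intro v hv
    have hxv : x + v ∈ convexHull ℝ {z | (T z).Nonempty} :=
      interior_subset (hball (by simpa using hv))
    obtain ⟨p, hp, hpv⟩ := mem_fst_image_convexHull_of_mem_convexHull (x := x) hxv
    obtain ⟨n, hn⟩ := exists_nat_ge (max ‖p.2.1‖ p.2.2)
    exact mem_iUnion.2 ⟨n, p, hp, by simpa using hpv, (le_max_left _ _).trans hn,
      (le_max_right _ _).trans hn⟩
  obtain ⟨n, w, hw, hwint⟩ := exists_inter_interior_closure_nonempty_of_subset_iUnion
    isOpen_ball ⟨0, mem_ball_self hε⟩ hcover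
  obtain ⟨m, hm⟩ := mem_iUnion.1 (hcover (by simpa using hw : -w ∈ ball (0 : E) ε))
  set C : ℝ := max n m
  have hconv : Convex ℝ (closure (anchoredSublevel T x C)) :=
    (convex_anchoredSublevel C).closure
  -- `0` is the midpoint of an interior point `w` and the point `-w` of the sublevel set
  have h0 : (0 : E) ∈ interior (closure (anchoredSublevel T x C)) := by
    have := hconv.combo_interior_self_mem_interior
      (interior_mono (closure_mono (anchoredSublevel_mono (le_max_left _ _))) hwint)
      (subset_closure (anchoredSublevel_mono (le_max_right _ _) hm))
      (by norm_num : (0 : ℝ) < 1 / 2) (by norm_num : (0 : ℝ) ≤ 1 / 2) (by norm_num)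
    rwa [smul_neg, add_neg_cancel] at this
  obtain ⟨ρ, hρ, hρsub⟩ := Metric.nhds_basis_closedBall.mem_iff.1 (mem_interior_iff_mem_nhds.1 h0)
  exact ⟨C, min ρ 1, by positivity, by positivity, min_le_right _ _,
    (closedBall_subset_closedBall (min_le_left _ _)).trans hρsub⟩

theorem norm_mul_le_of_closedBall_subset
    (hmono : ∀ x y x' y', x' ∈ T x → y' ∈ T y → 0 ≤ (x' - y') (x - y))
    {p : E × StrongDual ℝ E × ℝ} (hp : p ∈ convexHull ℝ (anchoredGraph T x)) {C ρ : ℝ}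
    (hρ : 0 < ρ) (hball : closedBall 0 ρ ⊆ closure (anchoredSublevel T x C)) :
    ‖p.2.1‖ * ρ ≤ p.2.2 + C * (1 + ‖p.1‖) := by
  have hle : ∀ u ∈ closedBall (0 : E) ρ, p.2.1 u ≤ p.2.2 + C * (1 + ‖p.1‖) := fun u hu =>
    apply_le_of_mem_closure_anchoredSublevel hmono hp (hball hu)
  have := ContinuousLinearMap.opNorm_bound_of_ball_bound hρ _ p.2.1 fun u hu => by
    have hneg := hle (-u) (by simpa using hu)
    rw [map_neg] at hneg
    exact abs_le.2 ⟨by linarith, hle u hu⟩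
  rwa [le_div_iff₀ hρ] at this

theorem neg_le_of_closedBall_subset
    (hmono : ∀ x y x' y', x' ∈ T x → y' ∈ T y → 0 ≤ (x' - y') (x - y))
    {p : E × StrongDual ℝ E × ℝ} (hp : p ∈ convexHull ℝ (anchoredGraph T x)) {C ρ : ℝ}
    (hC : 0 ≤ C) (hρ : 0 < ρ) (hρ1 : ρ ≤ 1)
    (hball : closedBall 0 ρ ⊆ closure (anchoredSublevel T x C)) :
    -p.2.2 ≤ C / ρ * ‖p.1‖ := by
  have hself := apply_fst_le_of_mem_convexHull hmono hp
  rw [div_mul_eq_mul_div, le_div_iff₀ hρ]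
  rcases le_or_gt 0 p.2.2 with hs | hs
  · nlinarith [norm_nonneg p.1]
  rcases (norm_nonneg p.1).eq_or_lt with ht | ht
  · rw [norm_eq_zero.1 ht.symm, map_zero] at hself
    linarith
  set t := ‖p.1‖
  -- test the bound of `p.2.1` on the ball at the point of norm `ρ` opposite to `p.1`
  have hu : -(ρ / t) • p.1 ∈ closedBall (0 : E) ρ := by
    rw [mem_closedBall_zero_iff, norm_smul, norm_neg, Real.norm_of_nonneg (by positivity),
      div_mul_cancel₀ _ ht.ne']
  have hopp := apply_le_of_mem_closure_anchoredSublevel hmono hp (hball hu)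
  rw [map_smul, smul_eq_mul, neg_mul, div_mul_eq_mul_div] at hopp
  have hself' : ρ * p.2.1 p.1 ≤ ρ * p.2.2 := by gcongr
  have hopp' : -(ρ * p.2.1 p.1) ≤ (p.2.2 + C * (1 + t)) * t := by
    have := mul_le_mul_of_nonneg_right hopp ht.le
    rwa [neg_mul, div_mul_cancel₀ _ ht.ne'] at this
  nlinarith [mul_le_mul_of_nonneg_left hρ1 (mul_nonneg hC ht.le)]

theorem nonempty_of_forall_neg_le
    (hmax : ∀ x x', (∀ y y', y' ∈ T y → 0 ≤ (x' - y') (x - y)) → x' ∈ T x) {R : ℝ}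
    (hR : ∀ p ∈ convexHull ℝ (anchoredGraph T x), -p.2.2 ≤ R * ‖p.1‖) : (T x).Nonempty := by
  have hK : Convex ℝ ((fun p : E × StrongDual ℝ E × ℝ => (p.1, p.2.2)) ''
      convexHull ℝ (anchoredGraph T x)) :=
    (convex_convexHull ℝ _).is_linear_image ⟨fun _ _ => rfl, fun _ _ => rfl⟩
  obtain ⟨f, hf⟩ := exists_dual_le_of_convex hK R (by rintro _ ⟨p, hp, rfl⟩; exact hR p hp)
  refine ⟨f, hmax x f fun y y' hy' => ?_⟩
  have := hf _ ⟨(y - x, y', y' (y - x)), subset_convexHull ℝ _ ⟨by simpa using hy', rfl⟩, rfl⟩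
  rw [sub_apply, ← neg_sub y x, map_neg, map_neg]
  linarith

theorem isBounded_biUnion_ball_of_closedBall_subset
    (hmono : ∀ x y x' y', x' ∈ T x → y' ∈ T y → 0 ≤ (x' - y') (x - y)) {C ρ : ℝ}
    (hC : 0 ≤ C) (hρ : 0 < ρ) (hρ1 : ρ ≤ 1)
    (hball : closedBall 0 ρ ⊆ closure (anchoredSublevel T x C)) :
    Bornology.IsBounded (⋃ u ∈ ball x (ρ / 2), T u) := by
  refine isBounded_iff_forall_norm_le.2 ⟨4 * C / ρ, ?_⟩
  simp only [mem_iUnion]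
  rintro u' ⟨u, hu, hu'⟩
  have hp : (u - x, u', u' (u - x)) ∈ convexHull ℝ (anchoredGraph T x) :=
    subset_convexHull ℝ _ ⟨by simpa using hu', rfl⟩
  have hnorm := norm_mul_le_of_closedBall_subset hmono hp hρ hball
  have hux : ‖u - x‖ < ρ / 2 := by rwa [← dist_eq_norm]
  have happ : u' (u - x) ≤ ‖u'‖ * ‖u - x‖ := (le_abs_self _).trans (u'.le_opNorm _)
  rw [le_div_iff₀ hρ]
  nlinarith [norm_nonneg u', norm_nonneg (u - x)]

theorem nonempty_and_locally_bounded_of_mem_interior_convexHull [CompleteSpace E]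
    (hmono : ∀ x y x' y', x' ∈ T x → y' ∈ T y → 0 ≤ (x' - y') (x - y))
    (hmax : ∀ x x', (∀ y y', y' ∈ T y → 0 ≤ (x' - y') (x - y)) → x' ∈ T x)
    (hx : x ∈ interior (convexHull ℝ {z | (T z).Nonempty})) :
    (T x).Nonempty ∧ ∃ U ∈ 𝓝 x, Bornology.IsBounded (⋃ u ∈ U, T u) := by
  obtain ⟨C, ρ, hC, hρ, hρ1, hball⟩ := exists_closedBall_subset_closure_anchoredSublevel hx
  exact ⟨nonempty_of_forall_neg_le hmax fun p hp =>
      neg_le_of_closedBall_subset hmono hp hC hρ hρ1 hball,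
    ball x (ρ / 2), ball_mem_nhds x (by positivity),
    isBounded_biUnion_ball_of_closedBall_subset hmono hC hρ hρ1 hball⟩

end Rockafellar

/-- **Rockafellar.** If `T` is maximal monotone on a real Banach space `E` and the interior of
the convex hull of `D(T)` is nonempty, then `int D(T) = int (co D(T))` (so `int D(T)` is
convex), `T` is locally bounded at every point of `int D(T)`, and
`closure D(T) = closure (int D(T))`, hence `closure D(T)` is convex. -/
theorem rockafellar_local_boundedness_and_convexity
    {E : Type*} [NormedAddCommGroup E] [NormedSpace ℝ E] [CompleteSpace E]
    (T : E → Set (StrongDual ℝ E))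
    (hmono : ∀ x y x' y', x' ∈ T x → y' ∈ T y → 0 ≤ (x' - y') (x - y))
    (hmax : ∀ x x', (∀ y y', y' ∈ T y → 0 ≤ (x' - y') (x - y)) → x' ∈ T x)
    (hint : (interior (convexHull ℝ {x | (T x).Nonempty})).Nonempty) :
    interior {x | (T x).Nonempty} = interior (convexHull ℝ {x | (T x).Nonempty}) ∧
    Convex ℝ (interior {x | (T x).Nonempty}) ∧
    (∀ x ∈ interior {x | (T x).Nonempty},
      ∃ U ∈ nhds x, Bornology.IsBounded (⋃ u ∈ U, T u)) ∧
    closure {x | (T x).Nonempty} = closure (interior {x | (T x).Nonempty}) ∧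
    Convex ℝ (closure {x | (T x).Nonempty}) := by
  set D := {x | (T x).Nonempty}
  have hcoD : Convex ℝ (convexHull ℝ D) := convex_convexHull ℝ D
  have hkey := fun x (hx : x ∈ interior (convexHull ℝ D)) =>
    Rockafellar.nonempty_and_locally_bounded_of_mem_interior_convexHull hmono hmax hx
  have hinterior : interior D = interior (convexHull ℝ D) :=
    (interior_mono (subset_convexHull ℝ D)).antisymm
      (interior_maximal (fun x hx => (hkey x hx).1) isOpen_interior)
  have hconv : Convex ℝ (interior D) := hinterior ▸ hcoD.interior
  have hclosure : closure D = closure (interior D) := by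
    refine (closure_minimal ?_ isClosed_closure).antisymm (closure_mono interior_subset)
    rw [hinterior, hcoD.closure_interior_eq_closure_of_nonempty_interior hint]
    exact (subset_convexHull ℝ D).trans subset_closure
  exact ⟨hinterior, hconv, fun x hx => (hkey x (hinterior ▸ hx)).2, hclosure,
    hclosure ▸ hconv.closure⟩
end

section
/- Let E be a reflexive real Banach space and T : E → 2^{E*} a maximal monotone operator. Then the interior of R(T) is convex, and if the interior of R(T) is nonempty then the closure of R(T) is convex. -/
/-!
It suffices to show that `interior (convexHull R(T)) ⊆ R(T)`: then `interior R(T)` equals the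
interior of the convex hull and, when nonempty, `closure R(T)` equals its closure.

For `w` in the interior of the convex hull, separating the epigraph of the Fitzpatrick function
of `T` from the strict hypograph of `-(‖x‖² + ‖x'‖²) / 2` gives, by reflexivity, `0 ∈ R(T + J)`
for the duality map `J`; applied to the rescaled operators `λ⁻¹ (T - w)` this yields
`w = x'ₙ + λₙ jₙ` with `x'ₙ ∈ T xₙ`, `jₙ ∈ J xₙ` and `λₙ → 0`. A Baire category argument shows
that `T⁻¹` is bounded near `w`, so the `xₙ` are bounded; by reflexivity they have a weak cluster
point `x`, and passing to the limit in the monotonicity inequalities shows that `(x, w)` is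
monotonically related to the graph of `T`, hence `w ∈ T x` by maximality.
-/

open NormedSpace Metric Set Filter Topology

section ConvexHull

variable {X : Type*} [AddCommGroup X] [Module ℝ X] [TopologicalSpace X] {s : Set X}

theorem interior_convexHull_eq_of_subset (h : interior (convexHull ℝ s) ⊆ s) :
    interior (convexHull ℝ s) = interior s :=
  (interior_maximal h isOpen_interior).antisymm (interior_mono (subset_convexHull ℝ s))

theorem closure_convexHull_eq_of_subset [IsTopologicalAddGroup X] [ContinuousSMul ℝ X]
    (h : interior (convexHull ℝ s) ⊆ s)
    (hne : (interior s).Nonempty) : closure (convexHull ℝ s) = closure s := by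
  refine subset_antisymm ?_ (closure_mono (subset_convexHull ℝ s))
  rw [← (convex_convexHull ℝ s).closure_interior_eq_closure_of_nonempty_interior
    (by rwa [interior_convexHull_eq_of_subset h])]
  exact closure_mono h

end ConvexHull

theorem IsOpen.exists_nonempty_interior_of_subset_iUnion {X : Type*} [TopologicalSpace X]
    [BaireSpace X] {U : Set X} (hU : IsOpen U)
    (hne : U.Nonempty) {F : ℕ → Set X} (hF : ∀ n, IsClosed (F n)) (hcover : U ⊆ ⋃ n, F n) :
    ∃ n, (interior (F n)).Nonempty := by
  by_contra! h
  exact not_isMeagre_of_isOpen hU hne <| (isMeagre_iUnion fun n ↦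
    ((hF n).isNowhereDense_iff.2 (h n)).isMeagre).mono hcover

theorem exists_mem_nhds_of_mem_interior_iUnion {X : Type*} [AddCommGroup X] [Module ℝ X]
    [TopologicalSpace X] [IsTopologicalAddGroup X] [ContinuousSMul ℝ X] [BaireSpace X]
    {F : ℕ → Set X} (hclosed : ∀ n, IsClosed (F n))
    (hconv : ∀ n, Convex ℝ (F n)) (hmono : Monotone F) {w : X}
    (hw : w ∈ interior (⋃ n, F n)) : ∃ n, F n ∈ 𝓝 w := by
  let r := ContinuousAffineEquiv.pointReflection ℝ w
  have hrr : ∀ v, r (r v) = v := ContinuousAffineEquiv.pointReflection_involutive ℝ w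
  -- `D n` is convex and symmetric about `w`, so an interior point of `D n` forces `w` into it
  let D n := F n ∩ r ⁻¹' F n
  have hD : ∀ n, r ⁻¹' D n = D n := fun n ↦ by ext v; simp [D, hrr, and_comm]
  let U := interior (⋃ n, F n) ∩ r ⁻¹' interior (⋃ n, F n)
  have hU : IsOpen U := isOpen_interior.inter (isOpen_interior.preimage r.continuous)
  have hwU : w ∈ U := ⟨hw, by simpa [r, ContinuousAffineEquiv.pointReflection_self] using hw⟩
  have hcover : U ⊆ ⋃ n, D n := by
    rintro v ⟨hv, hrv⟩
    obtain ⟨i, hi⟩ := mem_iUnion.1 (interior_subset hv)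
    obtain ⟨j, hj⟩ := mem_iUnion.1 (interior_subset hrv)
    exact mem_iUnion.2 ⟨max i j, hmono (le_max_left i j) hi, hmono (le_max_right i j) hj⟩
  obtain ⟨n, v, hv⟩ := hU.exists_nonempty_interior_of_subset_iUnion ⟨w, hwU⟩
    (fun n ↦ (hclosed n).inter ((hclosed n).preimage r.continuous)) hcover
  have hrv : r v ∈ interior (D n) := by
    have h : r ⁻¹' interior (D n) = interior (r ⁻¹' D n) := r.toHomeomorph.preimage_interior _
    rw [hD] at h
    exact h.symm.subset hv
  have hmid : w = (1 / 2 : ℝ) • v + (1 / 2 : ℝ) • r v := by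
    simp only [r, ContinuousAffineEquiv.pointReflection_apply, vsub_eq_sub, vadd_eq_add]
    module
  have hDconv : Convex ℝ (D n) :=
    (hconv n).inter ((hconv n).affine_preimage r.toAffineEquiv.toAffineMap)
  have hwD : w ∈ interior (D n) := by
    rw [hmid]
    exact hDconv.interior hv hrv (by norm_num) (by norm_num) (by norm_num)
  exact ⟨n, mem_of_superset (mem_interior_iff_mem_nhds.1 hwD) inter_subset_left⟩

theorem exists_eventually_forall_le_of_mem_interior_convexHull {X ι : Type*} [AddCommGroup X]
    [Module ℝ X] [TopologicalSpace X] [IsTopologicalAddGroup X] [ContinuousSMul ℝ X]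
    [BaireSpace X] {f : ι → X → ℝ} (hcont : ∀ i, Continuous (f i))
    (hconv : ∀ i, ConvexOn ℝ univ (f i)) {S : Set X}
    (hbdd : ∀ v ∈ S, BddAbove (range fun i ↦ f i v)) {w : X}
    (hw : w ∈ interior (convexHull ℝ S)) : ∃ K : ℝ, ∀ᶠ v in 𝓝 w, ∀ i, f i v ≤ K := by
  let F : ℕ → Set X := fun n ↦ ⋂ i, {v | f i v ≤ n}
  have hclosed : ∀ n, IsClosed (F n) := fun n ↦
    isClosed_iInter fun i ↦ isClosed_le (hcont i) continuous_const
  have hFconv : ∀ n, Convex ℝ (F n) := fun n ↦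
    convex_iInter fun i ↦ by simpa using (hconv i).convex_le n
  have hmono : Monotone F := fun m n hmn ↦
    iInter_mono fun i v (hv : f i v ≤ m) ↦ (hv.trans (by exact_mod_cast hmn) : f i v ≤ n)
  have hS : S ⊆ ⋃ n, F n := fun v hv ↦ by
    obtain ⟨K, hK⟩ := hbdd v hv
    obtain ⟨n, hn⟩ := exists_nat_ge K
    exact mem_iUnion.2 ⟨n, mem_iInter.2 fun i ↦ (hK (mem_range_self i)).trans hn⟩
  have hhull : convexHull ℝ S ⊆ ⋃ n, F n :=
    convexHull_min hS (hmono.directed_le.convex_iUnion fun n ↦ hFconv n)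
  obtain ⟨n, hn⟩ := exists_mem_nhds_of_mem_interior_iUnion hclosed hFconv hmono
    (interior_mono hhull hw)
  exact ⟨n, eventually_of_mem hn fun v hv i ↦ (mem_iInter.1 hv i : f i v ≤ n)⟩

theorem le_of_mapClusterPt_of_tendsto {ι : Type*} {l : Filter ι} {a b : ι → ℝ} {α β : ℝ}
    (ha : MapClusterPt α l a) (hb : Tendsto b l (𝓝 β)) (hba : ∀ i, b i ≤ a i) : β ≤ α :=
  le_of_forall_sub_le fun _ hε ↦ isClosed_Ici.mem_of_mapClusterPt ha <|
    (hb.eventually (lt_mem_nhds (sub_lt_self β hε))).mono fun i hi ↦ hi.le.trans (hba i)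

namespace ContinuousLinearMap

variable {X : Type*} [NormedAddCommGroup X] [NormedSpace ℝ X]

theorem neg_opNorm_mul_norm_le (f : StrongDual ℝ X) (x : X) : -(‖f‖ * ‖x‖) ≤ f x := by
  have h := f.le_opNorm x
  rw [Real.norm_eq_abs] at h
  linarith [neg_abs_le (f x)]

theorem neg_sq_opNorm_add_sq_norm_div_two_le (f : StrongDual ℝ X) (x : X) :
    -((‖f‖ ^ 2 + ‖x‖ ^ 2) / 2) ≤ f x := by
  nlinarith [f.neg_opNorm_mul_norm_le x, sq_nonneg (‖f‖ - ‖x‖)]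

theorem sq_opNorm_div_two_le (f : StrongDual ℝ X) {c : ℝ} (h : ∀ x, f x - ‖x‖ ^ 2 / 2 ≤ c) :
    ‖f‖ ^ 2 / 2 ≤ c := by
  have hc : 0 ≤ c := by simpa using h 0
  -- test `f` against `‖f‖ • x` for unit vectors `x`
  have hbound : ‖‖f‖ • f‖ ≤ c + ‖f‖ ^ 2 / 2 := by
    refine opNorm_le_of_unit_norm (by positivity) fun x hx ↦ ?_
    have h₁ := h (‖f‖ • x)
    have h₂ := h (‖f‖ • -x)
    simp only [map_smul, map_neg, smul_eq_mul, norm_smul, norm_neg, norm_norm, hx,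
      mul_one] at h₁ h₂
    rw [smul_apply, smul_eq_mul, norm_mul, norm_norm, Real.norm_eq_abs]
    rcases abs_cases (f x) with ⟨habs, _⟩ | ⟨habs, _⟩ <;> rw [habs] <;> linarith
  rw [norm_smul, norm_norm] at hbound
  nlinarith

end ContinuousLinearMap

theorem convexOn_univ_sq_norm {F : Type*} [SeminormedAddCommGroup F] [NormedSpace ℝ F] :
    ConvexOn ℝ univ fun x : F ↦ ‖x‖ ^ 2 :=
  (convexOn_norm convex_univ).pow (fun x _ ↦ norm_nonneg x) 2

theorem ConvexOn.exists_nonvertical_separation {X : Type*} [NormedAddCommGroup X]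
    [NormedSpace ℝ X] {q : X → ℝ} (hq : ConvexOn ℝ univ q) (hqc : Continuous q)
    {A : Set (X × ℝ)} (hA : Convex ℝ A) (hAne : A.Nonempty) (hqA : ∀ p ∈ A, 0 ≤ q p.1 + p.2) :
    ∃ (φ : StrongDual ℝ X) (c : ℝ), (∀ z, φ z - q z ≤ c) ∧ ∀ p ∈ A, c ≤ φ p.1 + p.2 := by
  have hO : Convex ℝ {p : X × ℝ | p.2 < -q p.1} := by
    simpa using hq.neg.convex_strict_hypograph
  obtain ⟨f, u, hfO, hfA⟩ := geometric_hahn_banach_open hO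
    (isOpen_lt continuous_snd (hqc.comp continuous_fst).neg) hA
    (disjoint_left.2 fun p hpO hpA ↦ (hqA p hpA).not_gt (by linarith [show p.2 < -q p.1 from hpO]))
  have hsplit : ∀ z t, f (z, t) = f (z, 0) + t * f (0, 1) := fun z t ↦ by
    rw [show ((z, t) : X × ℝ) = (z, 0) + t • (0, 1) by simp, map_add, map_smul, smul_eq_mul]
  set s := f (0, 1)
  have hbelow : ∀ z t, t < -q z → f (z, 0) + t * s < u := fun z t ht ↦
    hsplit z t ▸ hfO (z, t) ht
  have hs : 0 < s := by
    obtain ⟨⟨z₀, t₀⟩, hp⟩ := hAne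
    have h₀ := hsplit z₀ t₀ ▸ hfA _ hp
    by_contra! hs
    have h₁ := hbelow z₀ (min (-q z₀ - 1) t₀) (by linarith [min_le_left (-q z₀ - 1) t₀])
    nlinarith [min_le_right (-q z₀ - 1) t₀]
  refine ⟨s⁻¹ • f.comp (ContinuousLinearMap.inl ℝ X ℝ), u / s, fun z ↦ ?_, fun ⟨z, t⟩ hp ↦ ?_⟩
  · have hz : f (z, 0) - q z * s ≤ u := by
      refine le_of_forall_pos_lt_add fun ε hε ↦ ?_
      have := hbelow z (-q z - ε / s) (by linarith [div_pos hε hs])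
      rw [sub_mul, div_mul_cancel₀ _ hs.ne'] at this
      linarith
    have hφ : (s⁻¹ * f (z, 0) - q z) * s = f (z, 0) - q z * s := by field_simp
    simp only [smul_apply, ContinuousLinearMap.comp_apply,
      ContinuousLinearMap.inl_apply, smul_eq_mul]
    rw [le_div_iff₀ hs, hφ]
    exact hz
  · have h := hsplit z t ▸ hfA _ hp
    have hφ : (s⁻¹ * f (z, 0) + t) * s = f (z, 0) + t * s := by field_simp
    simp only [smul_apply, ContinuousLinearMap.comp_apply,
      ContinuousLinearMap.inl_apply, smul_eq_mul]
    rw [div_le_iff₀ hs, hφ]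
    exact h

section Dual

variable {E : Type*} [NormedAddCommGroup E] [NormedSpace ℝ E]

theorem norm_inclusionInDoubleDual (x : E) : ‖inclusionInDoubleDual ℝ E x‖ = ‖x‖ :=
  (inclusionInDoubleDualLi ℝ).norm_map x

theorem exists_forall_mapClusterPt_of_norm_le
    (hrefl : Function.Surjective (inclusionInDoubleDual ℝ E)) {x : ℕ → E} {M : ℝ}
    (hx : ∀ n, ‖x n‖ ≤ M) :
    ∃ xb : E, ∀ f : StrongDual ℝ E, MapClusterPt (f xb) atTop fun n ↦ f (x n) := by
  let u : ℕ → WeakDual ℝ (StrongDual ℝ E) :=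
    fun n ↦ StrongDual.toWeakDual (inclusionInDoubleDual ℝ E (x n))
  obtain ⟨φ, -, hφ⟩ := (WeakDual.isCompact_closedBall (0 : StrongDual ℝ (StrongDual ℝ E)) M
    ).exists_mapClusterPt (f := atTop) (u := u) <| le_principal_iff.2 <| mem_map.2 <|
      univ_mem' fun n ↦ by
        simpa [u, norm_inclusionInDoubleDual] using hx n
  obtain ⟨xb, hxb⟩ := hrefl (WeakDual.toStrongDual φ)
  refine ⟨xb, fun f ↦ ?_⟩
  have hf : φ f = f xb := by rw [← WeakDual.toStrongDual_apply, ← hxb, dual_def]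
  exact hf ▸ hφ.continuousAt_comp (WeakDual.eval_continuous f).continuousAt

end Dual

section MonotoneOperator

variable {E : Type*} [NormedAddCommGroup E] [NormedSpace ℝ E]

def IsMonotoneOperator (T : E → Set (StrongDual ℝ E)) : Prop :=
  ∀ x y x' y', x' ∈ T x → y' ∈ T y → 0 ≤ (x' - y') (x - y)

structure IsMaximalMonotone (T : E → Set (StrongDual ℝ E)) : Prop where
  monotone : IsMonotoneOperator T
  maximal : ∀ x x', (∀ y y', y' ∈ T y → 0 ≤ (x' - y') (x - y)) → x' ∈ T x

def dualityMap (x : E) : Set (StrongDual ℝ E) :=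
  {j | ‖j‖ = ‖x‖ ∧ j x = ‖x‖ ^ 2}

/-- The epigraph of the Fitzpatrick function `(x, x') ↦ ⨆ (y' ∈ T y), x' y + y' x - y' y`. -/
def fitzpatrickEpigraph (T : E → Set (StrongDual ℝ E)) : Set ((E × StrongDual ℝ E) × ℝ) :=
  {p | ∀ y y', y' ∈ T y → p.1.2 y + y' p.1.1 - y' y ≤ p.2}

variable {T : E → Set (StrongDual ℝ E)}

theorem convex_fitzpatrickEpigraph (T : E → Set (StrongDual ℝ E)) :
    Convex ℝ (fitzpatrickEpigraph T) := by
  intro p hp p' hp' a b ha hb hab y y' hy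
  have h₁ := mul_le_mul_of_nonneg_left (hp y y' hy) ha
  have h₂ := mul_le_mul_of_nonneg_left (hp' y y' hy) hb
  simp only [Prod.fst_add, Prod.snd_add, Prod.smul_fst, Prod.smul_snd, add_apply, smul_apply,
    map_add, map_smul, smul_eq_mul]
  linear_combination h₁ + h₂ + y' y * hab

theorem IsMonotoneOperator.mem_fitzpatrickEpigraph (hT : IsMonotoneOperator T) {y : E}
    {y' : StrongDual ℝ E} (hy : y' ∈ T y) : ((y, y'), y' y) ∈ fitzpatrickEpigraph T := by
  intro z z' hz
  have := hT y z y' z' hy hz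
  simp only [map_sub, sub_apply] at this
  dsimp only
  linarith

theorem IsMaximalMonotone.apply_le_of_mem_fitzpatrickEpigraph (hT : IsMaximalMonotone T)
    {x : E} {x' : StrongDual ℝ E} {t : ℝ} (hp : ((x, x'), t) ∈ fitzpatrickEpigraph T) :
    x' x ≤ t := by
  by_contra! hlt
  have hx : x' ∈ T x := hT.maximal x x' fun y y' hy ↦ by
    have := hp y y' hy
    simp only [map_sub, sub_apply]
    dsimp only at this
    linarith
  linarith [hp x x' hx]

theorem IsMaximalMonotone.exists_mem (hT : IsMaximalMonotone T) : ∃ y y', y' ∈ T y := by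
  by_contra! h
  exact h 0 0 (hT.maximal 0 0 fun y y' hy ↦ absurd hy (h y y'))

theorem IsMaximalMonotone.exists_separation
    (hrefl : Function.Surjective (inclusionInDoubleDual ℝ E)) (hT : IsMaximalMonotone T) :
    ∃ (p : StrongDual ℝ E) (e : E) (c : ℝ),
      (‖p‖ ^ 2 + ‖e‖ ^ 2) / 2 ≤ c ∧ ∀ y y', y' ∈ T y → c ≤ p y + y' e + y' y := by
  let q : E × StrongDual ℝ E → ℝ := fun z ↦ (‖z.1‖ ^ 2 + ‖z.2‖ ^ 2) / 2
  have hq : ConvexOn ℝ univ q := by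
    have := (convexOn_univ_sq_norm.comp_linearMap (LinearMap.fst ℝ E (StrongDual ℝ E))).add
      (convexOn_univ_sq_norm.comp_linearMap (LinearMap.snd ℝ E (StrongDual ℝ E)))
    simpa [q, div_eq_inv_mul] using this.smul (c := (1 / 2 : ℝ)) (by norm_num)
  obtain ⟨y₀, y₀', hy₀⟩ := hT.exists_mem
  obtain ⟨φ, c, hφq, hφA⟩ := hq.exists_nonvertical_separation (by fun_prop)
    (convex_fitzpatrickEpigraph T) ⟨_, hT.monotone.mem_fitzpatrickEpigraph hy₀⟩
    fun ⟨⟨x, x'⟩, t⟩ hp ↦ by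
      have := hT.apply_le_of_mem_fitzpatrickEpigraph hp
      have := x'.neg_sq_opNorm_add_sq_norm_div_two_le x
      simp only [q]
      linarith
  let p := φ.comp (ContinuousLinearMap.inl ℝ E (StrongDual ℝ E))
  obtain ⟨e, he⟩ := hrefl (φ.comp (ContinuousLinearMap.inr ℝ E (StrongDual ℝ E)))
  have hφ : ∀ x x', φ (x, x') = p x + x' e := fun x x' ↦ by
    rw [← dual_def ℝ E e x', he]
    simp only [p, ContinuousLinearMap.comp_apply, ContinuousLinearMap.inl_apply,
      ContinuousLinearMap.inr_apply, ← map_add, Prod.mk_add_mk, add_zero, zero_add]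
  refine ⟨p, e, c, ?_, fun y y' hy ↦ ?_⟩
  · have hp : ∀ x' : StrongDual ℝ E, ‖p‖ ^ 2 / 2 ≤ c - (x' e - ‖x'‖ ^ 2 / 2) := fun x' ↦
      p.sq_opNorm_div_two_le fun x ↦ by
        have := hφq (x, x')
        rw [hφ] at this
        simp only [q] at this
        linarith
    have := (inclusionInDoubleDual ℝ E e).sq_opNorm_div_two_le (c := c - ‖p‖ ^ 2 / 2)
      fun x' ↦ by rw [dual_def]; linarith [hp x']
    rw [norm_inclusionInDoubleDual] at this
    linarith
  · have := hφA _ (hT.monotone.mem_fitzpatrickEpigraph hy)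
    rwa [hφ] at this

theorem IsMaximalMonotone.exists_neg_mem_dualityMap
    (hrefl : Function.Surjective (inclusionInDoubleDual ℝ E)) (hT : IsMaximalMonotone T) :
    ∃ x x', x' ∈ T x ∧ -x' ∈ dualityMap x := by
  obtain ⟨p, e, c, hc, hsep⟩ := hT.exists_separation hrefl
  have hmem : -p ∈ T (-e) := hT.maximal _ _ fun y y' hy ↦ by
    have := hsep y y' hy
    have := p.neg_sq_opNorm_add_sq_norm_div_two_le e
    simp only [map_sub, map_neg, sub_apply, neg_apply]
    linarith
  have hpe : c ≤ -p e := by simpa using hsep _ _ hmem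
  have hpe' := p.neg_opNorm_mul_norm_le e
  have hnorm : ‖p‖ = ‖e‖ := by nlinarith [sq_nonneg (‖p‖ - ‖e‖)]
  refine ⟨-e, -p, hmem, by simpa using hnorm, ?_⟩
  simp only [neg_neg, map_neg, norm_neg]
  rw [hnorm] at hc hpe'
  linarith

theorem IsMaximalMonotone.preimage_add_smul (hT : IsMaximalMonotone T) (w : StrongDual ℝ E)
    {c : ℝ} (hc : 0 < c) : IsMaximalMonotone fun x ↦ (fun s ↦ w + c • s) ⁻¹' T x := by
  have key : ∀ x y x' y', (w + c • x' - (w + c • y')) (x - y) = c * (x' - y') (x - y) :=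
    fun x y x' y' ↦ by
      rw [add_sub_add_left_eq_sub]
      simp only [sub_apply, smul_apply, smul_eq_mul]
      ring
  refine ⟨fun x y x' y' hx hy ↦ ?_, fun x x' h ↦ hT.maximal _ _ fun y y' hy ↦ ?_⟩
  · have := hT.monotone x y _ _ hx hy
    rw [key] at this
    exact (mul_nonneg_iff_of_pos_left hc).1 this
  · have hy' : y' = w + c • (c⁻¹ • (y' - w)) := by rw [smul_inv_smul₀ hc.ne']; abel
    rw [hy', key]
    exact mul_nonneg hc.le (h y _ (by rwa [mem_preimage, ← hy']))

theorem IsMaximalMonotone.exists_sub_eq_smul_mem_dualityMap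
    (hrefl : Function.Surjective (inclusionInDoubleDual ℝ E)) (hT : IsMaximalMonotone T)
    (w : StrongDual ℝ E) {c : ℝ} (hc : 0 < c) :
    ∃ x x' j, x' ∈ T x ∧ j ∈ dualityMap x ∧ w - x' = c • j := by
  obtain ⟨x, s, hs, hj⟩ := (hT.preimage_add_smul w hc).exists_neg_mem_dualityMap hrefl
  exact ⟨x, w + c • s, -s, hs, hj, by rw [smul_neg]; abel⟩

theorem IsMonotoneOperator.norm_sub_le_of_sub_eq_smul (hT : IsMonotoneOperator T) {y₀ : E}
    {y₀' : StrongDual ℝ E} (hy₀ : y₀' ∈ T y₀) {x : E} {x' j w : StrongDual ℝ E} {c : ℝ}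
    (hx : x' ∈ T x) (hj : j ∈ dualityMap x) (hc₀ : 0 ≤ c) (hc₁ : c ≤ 1) (hwx : w - x' = c • j) :
    ‖w - x'‖ ≤ 2 * (‖w - y₀'‖ + ‖y₀‖) := by
  have hnorm : ‖w - x'‖ = c * ‖x‖ := by rw [hwx, norm_smul, hj.1, Real.norm_of_nonneg hc₀]
  have hpair : (w - x') x = c * ‖x‖ ^ 2 := by rw [hwx, smul_apply, hj.2, smul_eq_mul]
  have hle : ‖w - x'‖ ≤ ‖x‖ := hnorm ▸ mul_le_of_le_one_left (norm_nonneg x) hc₁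
  have hmono := hT x y₀ x' y₀' hx hy₀
  have hexp : (x' - y₀') (x - y₀) = -(w - x') x + (w - y₀') x - (x' - y₀') y₀ := by
    simp only [map_sub, sub_apply]
    ring
  have h₁ : (w - y₀') x ≤ ‖w - y₀'‖ * ‖x‖ := (Real.le_norm_self _).trans ((w - y₀').le_opNorm x)
  have h₂ : -(x' - y₀') y₀ ≤ (‖w - x'‖ + ‖w - y₀'‖) * ‖y₀‖ :=
    calc -(x' - y₀') y₀ ≤ ‖(x' - y₀') y₀‖ := (neg_le_abs _).trans_eq (Real.norm_eq_abs _).symm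
      _ ≤ ‖x' - y₀'‖ * ‖y₀‖ := (x' - y₀').le_opNorm y₀
      _ ≤ (‖w - x'‖ + ‖w - y₀'‖) * ‖y₀‖ := by
        gcongr
        rw [norm_sub_rev w x']
        exact norm_sub_le_norm_sub_add_norm_sub _ _ _
  have hkey : ‖w - x'‖ * ‖x‖ ≤ ‖w - y₀'‖ * ‖x‖ + (‖w - x'‖ + ‖w - y₀'‖) * ‖y₀‖ := by
    have : ‖w - x'‖ * ‖x‖ = (w - x') x := by rw [hpair, hnorm]; ring
    linarith
  -- `hkey` and `‖w - x'‖ ≤ ‖x‖` give `(a - d) a ≤ (a + d) ‖y₀‖` for `a = ‖w - x'‖`, `d = ‖w - y₀'‖`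
  by_contra! H
  have hd : 0 ≤ ‖w - x'‖ - ‖w - y₀'‖ := by linarith [norm_nonneg y₀, norm_nonneg (w - y₀')]
  nlinarith [mul_le_mul_of_nonneg_left hle hd, norm_nonneg y₀, norm_nonneg (w - y₀')]

theorem IsMonotoneOperator.exists_bound_of_mem_interior_convexHull (hT : IsMonotoneOperator T)
    {w : StrongDual ℝ E} (hw : w ∈ interior (convexHull ℝ (⋃ x, T x))) (ρ : ℝ) :
    ∃ δ > 0, ∃ K, ∀ y y', y' ∈ T y → ‖y' - w‖ ≤ ρ → δ * ‖y‖ + (w - y') y ≤ K := by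
  let ι := {p : E × StrongDual ℝ E // p.2 ∈ T p.1 ∧ ‖p.2 - w‖ ≤ ρ}
  let f : ι → StrongDual ℝ E → ℝ := fun i v ↦ (v - i.1.2) i.1.1
  have hcont : ∀ i, Continuous (f i) := fun i ↦ by
    simp only [f, sub_apply]
    fun_prop
  have hconv : ∀ i, ConvexOn ℝ univ (f i) := fun i ↦ by
    refine ⟨convex_univ, fun a _ b _ s t _ _ hst ↦ le_of_eq ?_⟩
    simp only [f, sub_apply, add_apply, smul_apply, smul_eq_mul]
    linear_combination i.1.2 i.1.1 * hst
  have hbdd : ∀ v ∈ ⋃ x, T x, BddAbove (range fun i ↦ f i v) := by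
    intro v hv
    obtain ⟨z, hz⟩ := mem_iUnion.1 hv
    refine ⟨(‖v - w‖ + ρ) * ‖z‖, forall_mem_range.2 fun ⟨⟨y, y'⟩, hy, hρ⟩ ↦ ?_⟩
    have hmono := hT z y v y' hz hy
    rw [map_sub] at hmono
    calc (v - y') y ≤ (v - y') z := by linarith
      _ ≤ ‖v - y'‖ * ‖z‖ := (Real.le_norm_self _).trans ((v - y').le_opNorm z)
      _ ≤ (‖v - w‖ + ρ) * ‖z‖ := by
        gcongr
        refine (norm_sub_le_norm_sub_add_norm_sub v w y').trans ?_
        rw [norm_sub_rev w y']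
        linarith
  obtain ⟨K, hK⟩ := exists_eventually_forall_le_of_mem_interior_convexHull hcont hconv hbdd hw
  obtain ⟨δ, hδ, hball⟩ := nhds_basis_closedBall.eventually_iff.1 hK
  refine ⟨δ, hδ, K, fun y y' hy hρ ↦ ?_⟩
  -- evaluate at `w + δ • g` for a norming functional `g` of `y`
  obtain ⟨g, hg, hgy⟩ := exists_dual_vector'' ℝ y
  replace hgy : g y = ‖y‖ := by simpa using hgy
  have hmem : w + δ • g ∈ closedBall w δ := by
    rw [mem_closedBall, dist_eq_norm, add_sub_cancel_left, norm_smul, Real.norm_of_nonneg hδ.le]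
    exact mul_le_of_le_one_right hδ.le hg
  have hle : (w + δ • g - y') y ≤ K := hball hmem ⟨(y, y'), hy, hρ⟩
  have heq : (w + δ • g - y') y = δ * ‖y‖ + (w - y') y := by
    simp only [sub_apply, add_apply, smul_apply, hgy, smul_eq_mul]
    ring
  linarith

theorem IsMaximalMonotone.mem_of_tendsto_of_mapClusterPt (hT : IsMaximalMonotone T)
    {x : ℕ → E} {x' : ℕ → StrongDual ℝ E} {M : ℝ} {w : StrongDual ℝ E} {xb : E}
    (hx : ∀ n, x' n ∈ T (x n)) (hM : ∀ n, ‖x n‖ ≤ M) (hw : Tendsto x' atTop (𝓝 w))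
    (hxb : ∀ f : StrongDual ℝ E, MapClusterPt (f xb) atTop fun n ↦ f (x n)) : w ∈ T xb := by
  refine hT.maximal _ _ fun y y' hy ↦ ?_
  have hlow : ∀ n, (w - y') y - ‖w - x' n‖ * (M + ‖y‖) ≤ (w - y') (x n) := fun n ↦ by
    have hmono := hT.monotone (x n) y (x' n) y' (hx n) hy
    have hexp : (w - y') (x n) - (w - y') y = (x' n - y') (x n - y) + (w - x' n) (x n - y) := by
      simp only [map_sub, sub_apply]
      ring
    have hxy : ‖x n - y‖ ≤ M + ‖y‖ := by linarith [norm_sub_le (x n) y, hM n]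
    nlinarith [(w - x' n).neg_opNorm_mul_norm_le (x n - y),
      mul_le_mul_of_nonneg_left hxy (norm_nonneg (w - x' n))]
  have hlim : Tendsto (fun n ↦ (w - y') y - ‖w - x' n‖ * (M + ‖y‖)) atTop
      (𝓝 ((w - y') y)) := by
    have h0 : Tendsto (fun n ↦ ‖w - x' n‖) atTop (𝓝 0) := by
      simpa using ((tendsto_const_nhds (x := w)).sub hw).norm
    simpa using tendsto_const_nhds.sub (h0.mul_const (M + ‖y‖))
  have := le_of_mapClusterPt_of_tendsto (hxb (w - y')) hlim hlow
  rw [map_sub]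
  linarith

theorem IsMaximalMonotone.interior_convexHull_range_subset
    (hrefl : Function.Surjective (inclusionInDoubleDual ℝ E)) (hT : IsMaximalMonotone T) :
    interior (convexHull ℝ (⋃ x, T x)) ⊆ ⋃ x, T x := by
  intro w hw
  obtain ⟨y₀, y₀', hy₀⟩ := hT.exists_mem
  obtain ⟨δ, hδ, K, hK⟩ :=
    hT.monotone.exists_bound_of_mem_interior_convexHull hw (2 * (‖w - y₀'‖ + ‖y₀‖))
  let c : ℕ → ℝ := fun n ↦ 1 / (n + 1)
  have hc₀ : ∀ n, 0 < c n := fun n ↦ Nat.one_div_pos_of_nat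
  have hc₁ : ∀ n, c n ≤ 1 := fun n ↦ div_le_one_of_le₀ (by simp) (by positivity)
  choose x x' j hx hj hwx using fun n ↦ hT.exists_sub_eq_smul_mem_dualityMap hrefl w (hc₀ n)
  have hnorm : ∀ n, ‖w - x' n‖ = c n * ‖x n‖ := fun n ↦ by
    rw [hwx n, norm_smul, (hj n).1, Real.norm_of_nonneg (hc₀ n).le]
  have hbound : ∀ n, ‖x n‖ ≤ K / δ := fun n ↦ by
    have hρ := hT.monotone.norm_sub_le_of_sub_eq_smul hy₀ (hx n) (hj n) (hc₀ n).le (hc₁ n) (hwx n)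
    have hpair : 0 ≤ (w - x' n) (x n) := by
      rw [hwx n, smul_apply, (hj n).2, smul_eq_mul]
      exact mul_nonneg (hc₀ n).le (sq_nonneg _)
    rw [le_div_iff₀ hδ]
    linarith [hK _ _ (hx n) (by rwa [norm_sub_rev])]
  have hlim : Tendsto x' atTop (𝓝 w) := by
    rw [tendsto_iff_norm_sub_tendsto_zero]
    refine squeeze_zero (g := fun n ↦ c n * (K / δ)) (fun n ↦ norm_nonneg _) (fun n ↦ ?_)
      (by simpa [c] using tendsto_one_div_add_atTop_nhds_zero_nat.mul_const (K / δ))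
    rw [norm_sub_rev, hnorm]
    exact mul_le_mul_of_nonneg_left (hbound n) (hc₀ n).le
  obtain ⟨xb, hxb⟩ := exists_forall_mapClusterPt_of_norm_le hrefl hbound
  exact mem_iUnion.2 ⟨xb, hT.mem_of_tendsto_of_mapClusterPt hx hbound hlim hxb⟩

end MonotoneOperator

theorem interior_range_convex_of_reflexive_general
    {E : Type*} [NormedAddCommGroup E] [NormedSpace ℝ E]
    (hrefl : Function.Surjective (inclusionInDoubleDual ℝ E))
    (T : E → Set (StrongDual ℝ E))
    (hmono : ∀ x y x' y', x' ∈ T x → y' ∈ T y → 0 ≤ (x' - y') (x - y))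
    (hmax : ∀ x x', (∀ y y', y' ∈ T y → 0 ≤ (x' - y') (x - y)) → x' ∈ T x) :
    Convex ℝ (interior (⋃ x, T x)) ∧
    ((interior (⋃ x, T x)).Nonempty → Convex ℝ (closure (⋃ x, T x))) := by
  have hsub := IsMaximalMonotone.interior_convexHull_range_subset hrefl ⟨hmono, hmax⟩
  refine ⟨?_, fun hne ↦ ?_⟩
  · rw [← interior_convexHull_eq_of_subset hsub]
    exact (convex_convexHull ℝ _).interior
  · rw [← closure_convexHull_eq_of_subset hsub hne]
    exact (convex_convexHull ℝ _).closure

/-- If `E` is a reflexive real Banach space and `T : E → 2^{E*}` is maximal monotone, then the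
interior of the range `R(T)` is convex, and if this interior is nonempty then the closure of
`R(T)` is convex. -/
theorem interior_range_convex_of_reflexive
    {E : Type*} [NormedAddCommGroup E] [NormedSpace ℝ E] [CompleteSpace E]
    (hrefl : Function.Surjective (inclusionInDoubleDual ℝ E))
    (T : E → Set (StrongDual ℝ E))
    (hmono : ∀ x y x' y', x' ∈ T x → y' ∈ T y → 0 ≤ (x' - y') (x - y))
    (hmax : ∀ x x', (∀ y y', y' ∈ T y → 0 ≤ (x' - y') (x - y)) → x' ∈ T x) :
    Convex ℝ (interior (⋃ x, T x)) ∧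
    ((interior (⋃ x, T x)).Nonempty → Convex ℝ (closure (⋃ x, T x))) :=
  interior_range_convex_of_reflexive_general hrefl T hmono hmax
end

section
/- (Brøndsted–Rockafellar) Let f be a proper lower semicontinuous convex function on a real Banach space E. Given x₀ ∈ dom(f), ε > 0, λ > 0 and x₀* ∈ ∂_ε f(x₀), there exist x ∈ dom(f) and x* ∈ E* such that x* ∈ ∂f(x), ‖x − x₀‖ ≤ ε/λ and ‖x* − x₀*‖ ≤ λ. In particular D(∂f) is dense in dom(f), so the closures of D(∂f) and of dom(f) coincide and are convex. -/
/-!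
Subtracting `x₀*` turns the hypothesis into `f - x₀* ≥ (f - x₀*)(x₀) - ε`, so Ekeland's
variational principle with constant `λ` gives a point `x` with `λ‖x - x₀‖ ≤ ε` at which
`f - x₀*` lies above the concave cone `(f - x₀*)(x) - λ‖· - x‖`. The Hahn–Banach sandwich
theorem puts a continuous affine function between the two; its linear part `ℓ` has `‖ℓ‖ ≤ λ`,
and `x₀* + ℓ ∈ ∂f(x)`. Density of `D(∂f)` in `dom f` follows because every point of `dom f` has
ε-subgradients for all `ε > 0`, obtained by separating a point below the closed convex epigraph.
-/

open Set Filter Topology Metric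

namespace Ekeland

variable {X : Type*} [MetricSpace X] {D : Set X} {g : X → ℝ} {c : ℝ}

def improvementSet (D : Set X) (g : X → ℝ) (c : ℝ) (z : X) : Set X :=
  {y | y ∈ D ∧ g y + c * dist y z ≤ g z}

lemma self_mem_improvementSet {z : X} (hz : z ∈ D) : z ∈ improvementSet D g c z := by
  simp [improvementSet, hz]

lemma improvementSet_subset (hc : 0 ≤ c) {y z : X} (hy : y ∈ improvementSet D g c z) :
    improvementSet D g c y ⊆ improvementSet D g c z := by
  rintro w ⟨hwD, hw⟩
  refine ⟨hwD, ?_⟩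
  have := mul_le_mul_of_nonneg_left (dist_triangle w y z) hc
  linarith [hy.2]

lemma isClosed_improvementSet (hepi : IsClosed {p : X × ℝ | p.1 ∈ D ∧ g p.1 ≤ p.2}) (z : X) :
    IsClosed (improvementSet D g c z) := by
  have hpre : improvementSet D g c z =
      (fun y => (y, g z - c * dist y z)) ⁻¹' {p : X × ℝ | p.1 ∈ D ∧ g p.1 ≤ p.2} := by
    ext y
    simp [improvementSet, le_sub_iff_add_le]
  rw [hpre]
  exact hepi.preimage (by fun_prop)

/-- Take `z'` minimising `g` over `improvementSet D g c z` up to `c * δ`: since that set contains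
`improvementSet D g c z'`, no point of the latter can be further than `δ` from `z'`. -/
lemma exists_improvementSet_subset_closedBall {m : ℝ} (hm : ∀ y ∈ D, m ≤ g y) (hc : 0 < c)
    {z : X} (hz : z ∈ D) {δ : ℝ} (hδ : 0 < δ) :
    ∃ z' ∈ improvementSet D g c z, improvementSet D g c z' ⊆ closedBall z' δ := by
  set S := improvementSet D g c z
  have hbdd : BddBelow (g '' S) := ⟨m, by rintro _ ⟨y, hy, rfl⟩; exact hm y hy.1⟩
  have hne : (g '' S).Nonempty := ⟨g z, z, self_mem_improvementSet hz, rfl⟩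
  obtain ⟨_, ⟨z', hz'S, rfl⟩, hz'⟩ :=
    exists_lt_of_csInf_lt hne (lt_add_of_pos_right (sInf (g '' S)) (mul_pos hc hδ))
  refine ⟨z', hz'S, fun y hy => ?_⟩
  have hinf : sInf (g '' S) ≤ g y := csInf_le hbdd ⟨y, improvementSet_subset hc.le hz'S hy, rfl⟩
  rw [mem_closedBall]
  by_contra! h
  nlinarith [hy.2]

lemma exists_seq_improvementSet {m : ℝ} (hm : ∀ y ∈ D, m ≤ g y) (hc : 0 < c) {x₀ : X}
    (hx₀ : x₀ ∈ D) :
    ∃ u : ℕ → X, u 0 = x₀ ∧ (∀ n, u n ∈ D) ∧ (Antitone fun n => improvementSet D g c (u n)) ∧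
      ∀ n, improvementSet D g c (u (n + 1)) ⊆ closedBall (u (n + 1)) (1 / (n + 1)) := by
  choose! next hnext_mem hnext_sub using fun (n : ℕ) (z : X) (hz : z ∈ D) =>
    exists_improvementSet_subset_closedBall hm hc hz (Nat.one_div_pos_of_nat (n := n))
  let u : ℕ → X := fun n => Nat.rec (motive := fun _ => X) x₀ next n
  have hu : ∀ n, u n ∈ D ∧ u (n + 1) ∈ improvementSet D g c (u n) := by
    intro n
    induction n with
    | zero => exact ⟨hx₀, hnext_mem 0 x₀ hx₀⟩
    | succ n ih => exact ⟨(hnext_mem n _ ih.1).1, hnext_mem (n + 1) _ (hnext_mem n _ ih.1).1⟩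
  exact ⟨u, rfl, fun n => (hu n).1,
    antitone_nat_of_succ_le fun n => improvementSet_subset hc.le (hu n).2,
    fun n => hnext_sub n _ (hu n).1⟩

end Ekeland

open Ekeland in
theorem ekeland_variational_principle {X : Type*} [MetricSpace X] [CompleteSpace X] {D : Set X}
    {g : X → ℝ} (hepi : IsClosed {p : X × ℝ | p.1 ∈ D ∧ g p.1 ≤ p.2}) {m : ℝ}
    (hm : ∀ y ∈ D, m ≤ g y) {c : ℝ} (hc : 0 < c) {x₀ : X} (hx₀ : x₀ ∈ D) :
    ∃ x ∈ D, g x + c * dist x x₀ ≤ g x₀ ∧ ∀ y ∈ D, g x ≤ g y + c * dist y x := by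
  set S := improvementSet D g c
  obtain ⟨u, hu₀, huD, hanti, hsmall⟩ := exists_seq_improvementSet hm hc hx₀
  have hbdd : ∀ n, Bornology.IsBounded (S (u (n + 1))) :=
    fun n => isBounded_closedBall.subset (hsmall n)
  have hdiam : Tendsto (fun n => diam (S (u (n + 1)))) atTop (𝓝 0) := by
    have hlim : Tendsto (fun n : ℕ => 2 * (1 / ((n : ℝ) + 1))) atTop (𝓝 0) := by
      simpa using (tendsto_one_div_add_atTop_nhds_zero_nat (𝕜 := ℝ)).const_mul 2
    refine squeeze_zero (fun n => diam_nonneg) (fun n => ?_) hlim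
    exact (diam_mono (hsmall n) isBounded_closedBall).trans (diam_closedBall (by positivity))
  have hunique : ∀ x ∈ ⋂ n, S (u (n + 1)), ∀ y ∈ ⋂ n, S (u (n + 1)), y = x := by
    intro x hx y hy
    simp only [mem_iInter] at hx hy
    exact dist_le_zero.1 <|
      ge_of_tendsto' hdiam fun n => dist_le_diam_of_mem (hbdd n) (hy n) (hx n)
  obtain ⟨x, hx⟩ := nonempty_iInter_of_nonempty_biInter (fun n => isClosed_improvementSet hepi _)
    hbdd (fun N => ⟨u (N + 1), mem_iInter₂.2 fun n hn =>
      hanti (by omega : n + 1 ≤ N + 1) (self_mem_improvementSet (huD (N + 1)))⟩) hdiam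
  have hxS : ∀ n, x ∈ S (u (n + 1)) := mem_iInter.1 hx
  have hxS₀ : x ∈ S x₀ := hu₀ ▸ hanti (Nat.zero_le 1) (hxS 0)
  refine ⟨x, hxS₀.1, by simpa [S, improvementSet] using hxS₀.2, fun y hyD => ?_⟩
  by_contra! hlt
  have hyx : y = x := hunique x hx y
    (mem_iInter.2 fun n => improvementSet_subset hc.le (hxS n) ⟨hyD, hlt.le⟩)
  simp [hyx] at hlt

section Separation

variable {E : Type*} [AddCommGroup E] [Module ℝ E] [TopologicalSpace E]

lemma dual_prod_apply (Φ : StrongDual ℝ (E × ℝ)) (z : E) (t : ℝ) :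
    Φ (z, t) = Φ (z, 0) + t * Φ (0, 1) := by
  have : ((z, t) : E × ℝ) = (z, 0) + t • (0, 1) := by simp
  rw [this, map_add, map_smul, smul_eq_mul]

variable [IsTopologicalAddGroup E] [ContinuousSMul ℝ E]

theorem ConvexOn.exists_affine_between {D : Set E} {φ κ : E → ℝ} (hφ : ConvexOn ℝ D φ)
    (hκ : ConcaveOn ℝ univ κ) (hκc : Continuous κ) (hD : D.Nonempty)
    (hle : ∀ y ∈ D, κ y ≤ φ y) :
    ∃ (ℓ : StrongDual ℝ E) (b : ℝ), (∀ z, κ z ≤ ℓ z + b) ∧ ∀ y ∈ D, ℓ y + b ≤ φ y := by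
  have hopen : IsOpen {p : E × ℝ | p.1 ∈ univ ∧ p.2 < κ p.1} :=
    (isOpen_univ.preimage continuous_fst).inter
      (isOpen_lt continuous_snd (hκc.comp continuous_fst))
  have hdisj : Disjoint {p : E × ℝ | p.1 ∈ univ ∧ p.2 < κ p.1} {p | p.1 ∈ D ∧ φ p.1 ≤ p.2} :=
    disjoint_left.2 fun p hA hB => lt_irrefl _ ((hA.2.trans_le (hle _ hB.1)).trans_le hB.2)
  obtain ⟨Φ, u, hA, hB⟩ :=
    geometric_hahn_banach_open hκ.convex_strict_hypograph hopen hφ.convex_epigraph hdisj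
  set c := Φ (0, 1)
  have hA' : ∀ z, ∀ s > 0, Φ (z, 0) + (κ z - s) * c < u := fun z s hs => by
    rw [← dual_prod_apply]
    exact hA (z, κ z - s) ⟨mem_univ z, sub_lt_self _ hs⟩
  have hB' : ∀ y ∈ D, u ≤ Φ (y, 0) + φ y * c := fun y hy => by
    rw [← dual_prod_apply]
    exact hB (y, φ y) ⟨hy, le_rfl⟩
  obtain ⟨y₀, hy₀⟩ := hD
  have hc : 0 < c := by nlinarith [hA' y₀ 1 one_pos, hB' y₀ hy₀, hle y₀ hy₀]
  set ℓ : StrongDual ℝ E := -c⁻¹ • Φ.comp (.inl ℝ E ℝ)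
  have hℓ : ∀ z, ℓ z + u / c = (u - Φ (z, 0)) / c := fun z => by
    simp only [ℓ, smul_apply, ContinuousLinearMap.comp_apply,
      ContinuousLinearMap.inl_apply, smul_eq_mul]
    ring
  refine ⟨ℓ, u / c, fun z => le_of_forall_pos_lt_add fun s hs => ?_, fun y hy => ?_⟩
  · rw [← sub_lt_iff_lt_add, hℓ, lt_div_iff₀ hc]
    linarith [hA' z s hs]
  · rw [hℓ, div_le_iff₀ hc]
    linarith [hB' y hy]

variable [LocallyConvexSpace ℝ E]

theorem ConvexOn.exists_epsSubgradient {D : Set E} {φ : E → ℝ} (hφ : ConvexOn ℝ D φ)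
    (hepi : IsClosed {p : E × ℝ | p.1 ∈ D ∧ φ p.1 ≤ p.2}) {x : E} (hx : x ∈ D) {ε : ℝ}
    (hε : 0 < ε) : ∃ ℓ : StrongDual ℝ E, ∀ y ∈ D, ℓ (y - x) + φ x ≤ φ y + ε := by
  obtain ⟨Φ, u, hxu, hu⟩ := geometric_hahn_banach_point_closed hφ.convex_epigraph hepi
    (fun h => by linarith [h.2] : (x, φ x - ε) ∉ {p : E × ℝ | p.1 ∈ D ∧ φ p.1 ≤ p.2})
  set c := Φ (0, 1)
  have hu' : ∀ y ∈ D, u < Φ (y, 0) + φ y * c := fun y hy => by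
    rw [← dual_prod_apply]
    exact hu (y, φ y) ⟨hy, le_rfl⟩
  rw [dual_prod_apply] at hxu
  have hc : 0 < c := by nlinarith [hu' x hx]
  refine ⟨-c⁻¹ • Φ.comp (.inl ℝ E ℝ), fun y hy => ?_⟩
  have hΦ : -c⁻¹ * Φ (y - x, 0) = (Φ (x, 0) - Φ (y, 0)) / c := by
    rw [show ((y - x, 0) : E × ℝ) = (y, 0) - (x, 0) by simp, map_sub]
    ring
  have key : (Φ (x, 0) - Φ (y, 0)) / c ≤ φ y + ε - φ x := by
    rw [div_le_iff₀ hc]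
    linarith [hu' y hy]
  simp only [smul_apply, ContinuousLinearMap.comp_apply, ContinuousLinearMap.inl_apply,
    smul_eq_mul, hΦ]
  linarith

end Separation

section Normed

variable {E : Type*} [NormedAddCommGroup E] [NormedSpace ℝ E]

theorem ConvexOn.exists_subgradient_norm_le {D : Set E} {φ : E → ℝ} (hφ : ConvexOn ℝ D φ)
    {x : E} (hx : x ∈ D) {c : ℝ} (hc : 0 ≤ c) (hmin : ∀ y ∈ D, φ x ≤ φ y + c * ‖y - x‖) :
    ∃ ℓ : StrongDual ℝ E, ‖ℓ‖ ≤ c ∧ ∀ y ∈ D, ℓ (y - x) + φ x ≤ φ y := by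
  have hκ : ConcaveOn ℝ univ fun z => φ x - c * dist z x :=
    (concaveOn_const _ convex_univ).sub ((convexOn_dist x convex_univ).smul hc)
  obtain ⟨ℓ, b, hκℓ, hℓφ⟩ := hφ.exists_affine_between hκ (by fun_prop) ⟨x, hx⟩
    fun y hy => by simpa [dist_eq_norm, sub_le_iff_le_add] using hmin y hy
  have hb : b = φ x - ℓ x :=
    le_antisymm (by linarith [hℓφ x hx]) (by linarith [dist_self x ▸ hκℓ x])
  have hlow : ∀ v, -(c * ‖v‖) ≤ ℓ v := fun v => by
    have := hκℓ (x + v)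
    simp only [dist_eq_norm, add_sub_cancel_left, map_add, hb] at this
    linarith
  refine ⟨ℓ, ℓ.opNorm_le_bound hc fun v => abs_le.2 ⟨hlow v, ?_⟩, fun y hy => ?_⟩
  · simpa using hlow (-v)
  · have := hℓφ y hy
    rw [map_sub]
    linarith

theorem ConvexOn.exists_subgradient_near [CompleteSpace E] {D : Set E} {φ : E → ℝ}
    (hφ : ConvexOn ℝ D φ) (hepi : IsClosed {p : E × ℝ | p.1 ∈ D ∧ φ p.1 ≤ p.2}) {x₀ : E}
    (hx₀ : x₀ ∈ D) {ε c : ℝ} (hc : 0 < c) {x₀' : StrongDual ℝ E}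
    (hx₀' : ∀ y ∈ D, x₀' (y - x₀) + φ x₀ ≤ φ y + ε) :
    ∃ x ∈ D, ∃ x' : StrongDual ℝ E, (∀ y ∈ D, x' (y - x) + φ x ≤ φ y) ∧
      ‖x - x₀‖ ≤ ε / c ∧ ‖x' - x₀'‖ ≤ c := by
  set ψ := fun y => φ y - x₀' y
  have hψ : ConvexOn ℝ D ψ := hφ.sub (x₀'.toLinearMap.concaveOn hφ.1)
  have hψepi : IsClosed {p : E × ℝ | p.1 ∈ D ∧ ψ p.1 ≤ p.2} := by
    have : {p : E × ℝ | p.1 ∈ D ∧ ψ p.1 ≤ p.2} =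
        (fun p : E × ℝ => (p.1, p.2 + x₀' p.1)) ⁻¹' {p | p.1 ∈ D ∧ φ p.1 ≤ p.2} := by
      ext p
      simp [ψ]
    rw [this]
    exact hepi.preimage (by fun_prop)
  have hψlow : ∀ y ∈ D, ψ x₀ - ε ≤ ψ y := fun y hy => by
    have := hx₀' y hy
    simp only [ψ, map_sub] at this ⊢
    linarith
  obtain ⟨x, hxD, hxx₀, hxmin⟩ := ekeland_variational_principle hψepi hψlow hc hx₀
  obtain ⟨ℓ, hℓ, hsub⟩ :=
    hψ.exists_subgradient_norm_le hxD hc.le (by simpa [dist_eq_norm] using hxmin)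
  refine ⟨x, hxD, x₀' + ℓ, fun y hy => ?_, ?_, by simpa using hℓ⟩
  · have := hsub y hy
    simp only [ψ, map_sub] at this
    simp only [add_apply, map_sub]
    linarith
  · rw [le_div_iff₀ hc]
    rw [dist_eq_norm] at hxx₀
    linarith [hψlow x hxD]

def subgradientDomain (D : Set E) (φ : E → ℝ) : Set E :=
  {x ∈ D | ∃ x' : StrongDual ℝ E, ∀ y ∈ D, x' (y - x) + φ x ≤ φ y}

theorem ConvexOn.closure_subgradientDomain [CompleteSpace E] {D : Set E} {φ : E → ℝ}
    (hφ : ConvexOn ℝ D φ) (hepi : IsClosed {p : E × ℝ | p.1 ∈ D ∧ φ p.1 ≤ p.2}) :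
    closure (subgradientDomain D φ) = closure D := by
  refine (closure_mono fun x hx => hx.1).antisymm
    (closure_minimal (fun x hx => Metric.mem_closure_iff.2 fun δ hδ => ?_) isClosed_closure)
  obtain ⟨x', hx'⟩ := hφ.exists_epsSubgradient hepi hx (half_pos hδ)
  obtain ⟨y, hyD, y', hy', hyx, -⟩ := hφ.exists_subgradient_near hepi hx one_pos hx'
  refine ⟨y, ⟨hyD, y', hy'⟩, ?_⟩
  rw [dist_comm, dist_eq_norm]
  linarith [div_one (δ / 2) ▸ hyx]

end Normed

lemma EReal.le_coe_iff_of_ne_bot {a : EReal} (ha : a ≠ ⊥) {t : ℝ} :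
    a ≤ t ↔ a ≠ ⊤ ∧ a.toReal ≤ t := by
  induction a <;> simp_all

section ExtendedReal

variable {E : Type*} {f : E → EReal}

lemma isClosed_epigraph_toReal [TopologicalSpace E] (hbot : ∀ x, f x ≠ ⊥)
    (hlsc : LowerSemicontinuous f) :
    IsClosed {p : E × ℝ | p.1 ∈ {x | f x ≠ ⊤} ∧ (f p.1).toReal ≤ p.2} := by
  have : {p : E × ℝ | p.1 ∈ {x | f x ≠ ⊤} ∧ (f p.1).toReal ≤ p.2} =
      Prod.map id (↑) ⁻¹' {p : E × EReal | f p.1 ≤ p.2} := by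
    ext p
    simp [EReal.le_coe_iff_of_ne_bot (hbot p.1)]
  rw [this]
  exact hlsc.isClosed_epigraph.preimage (continuous_id.prodMap continuous_coe_real_ereal)

lemma convexOn_toReal [AddCommGroup E] [Module ℝ E] (hbot : ∀ x, f x ≠ ⊥)
    (hconv : ∀ x y : E, ∀ a b : ℝ, 0 ≤ a → 0 ≤ b → a + b = 1 →
      f (a • x + b • y) ≤ (a : EReal) * f x + (b : EReal) * f y) :
    ConvexOn ℝ {x | f x ≠ ⊤} fun x => (f x).toReal := by
  have key : ∀ x ∈ {x | f x ≠ ⊤}, ∀ y ∈ {x | f x ≠ ⊤}, ∀ a b : ℝ, 0 ≤ a → 0 ≤ b → a + b = 1 →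
      f (a • x + b • y) ≠ ⊤ ∧ (f (a • x + b • y)).toReal ≤ a * (f x).toReal + b * (f y).toReal := by
    intro x hx y hy a b ha hb hab
    rw [← EReal.le_coe_iff_of_ne_bot (hbot _), EReal.coe_add, EReal.coe_mul, EReal.coe_mul,
      EReal.coe_toReal hx (hbot x), EReal.coe_toReal hy (hbot y)]
    exact hconv x y a b ha hb hab
  exact ⟨fun x hx y hy a b ha hb hab => (key x hx y hy a b ha hb hab).1,
    fun x hx y hy a b ha hb hab => (key x hx y hy a b ha hb hab).2⟩

lemma forall_coe_add_le_add_coe_iff (hbot : ∀ x, f x ≠ ⊥) {x : E} (hx : f x ≠ ⊤) (ℓ : E → ℝ)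
    (ε : ℝ) : (∀ y, (ℓ y : EReal) + f x ≤ f y + ε) ↔
      ∀ y ∈ {x | f x ≠ ⊤}, ℓ y + (f x).toReal ≤ (f y).toReal + ε := by
  refine forall_congr' fun y => ?_
  rcases eq_or_ne (f y) ⊤ with hy | hy
  · simp [hy]
  · rw [← EReal.coe_toReal hx (hbot x), ← EReal.coe_toReal hy (hbot y)]
    simp only [ne_eq, mem_ofPred_eq, hy, not_false_eq_true, EReal.toReal_coe, forall_const]
    norm_cast

lemma forall_coe_add_le_iff (hbot : ∀ x, f x ≠ ⊥) {x : E} (hx : f x ≠ ⊤) (ℓ : E → ℝ) :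
    (∀ y, (ℓ y : EReal) + f x ≤ f y) ↔
      ∀ y ∈ {x | f x ≠ ⊤}, ℓ y + (f x).toReal ≤ (f y).toReal := by
  simpa using forall_coe_add_le_add_coe_iff hbot hx ℓ 0

lemma setOf_exists_subgradient_eq_subgradientDomain [NormedAddCommGroup E] [NormedSpace ℝ E]
    (hbot : ∀ x, f x ≠ ⊥) {x₀ : E} (hx₀ : f x₀ ≠ ⊤) :
    {x | ∃ x' : StrongDual ℝ E, ∀ y, ((x' (y - x) : ℝ) : EReal) + f x ≤ f y} =
      subgradientDomain {x | f x ≠ ⊤} fun x => (f x).toReal := by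
  ext x
  refine ⟨fun ⟨x', hx'⟩ => ?_, fun ⟨hx, x', hx'⟩ => ⟨x', (forall_coe_add_le_iff hbot hx _).2 hx'⟩⟩
  have hx : f x ≠ ⊤ := fun h => by
    have := hx' x₀
    rw [h, EReal.coe_add_top, top_le_iff] at this
    exact hx₀ this
  exact ⟨hx, x', (forall_coe_add_le_iff hbot hx _).1 hx'⟩

end ExtendedReal

theorem brondsted_rockafellar_general
    {E : Type*} [NormedAddCommGroup E] [NormedSpace ℝ E] [CompleteSpace E]
    (f : E → EReal)
    (hbot : ∀ x, f x ≠ ⊥)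
    (hlsc : LowerSemicontinuous f)
    (hconv : ∀ x y : E, ∀ a b : ℝ, 0 ≤ a → 0 ≤ b → a + b = 1 →
      f (a • x + b • y) ≤ (a : EReal) * f x + (b : EReal) * f y)
    (x₀ : E) (hx₀ : f x₀ ≠ ⊤) (ε lam : ℝ) (hlam : 0 < lam)
    (x₀' : StrongDual ℝ E)
    (hx₀' : ∀ y, ((x₀' (y - x₀) : ℝ) : EReal) + f x₀ ≤ f y + (ε : EReal)) :
    (∃ (x : E) (x' : StrongDual ℝ E), f x ≠ ⊤ ∧
      (∀ y, ((x' (y - x) : ℝ) : EReal) + f x ≤ f y) ∧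
      ‖x - x₀‖ ≤ ε / lam ∧ ‖x' - x₀'‖ ≤ lam) ∧
    closure {x | ∃ x' : StrongDual ℝ E, ∀ y, ((x' (y - x) : ℝ) : EReal) + f x ≤ f y}
      = closure {x | f x ≠ ⊤} ∧
    Convex ℝ (closure {x | f x ≠ ⊤}) := by
  have hφ := convexOn_toReal hbot hconv
  have hepi := isClosed_epigraph_toReal hbot hlsc
  refine ⟨?_, ?_, hφ.1.closure⟩
  · obtain ⟨x, hx, x', hx', hdist, hnorm⟩ := hφ.exists_subgradient_near hepi hx₀ hlam
      ((forall_coe_add_le_add_coe_iff hbot hx₀ _ ε).1 hx₀')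
    exact ⟨x, x', hx, (forall_coe_add_le_iff hbot hx _).2 hx', hdist, hnorm⟩
  · rw [setOf_exists_subgradient_eq_subgradientDomain hbot hx₀]
    exact hφ.closure_subgradientDomain hepi

/-- **Brøndsted–Rockafellar.** Let `f` be a proper lower semicontinuous convex function on a
real Banach space `E` (with values in `ℝ ∪ {∞}`, modelled as `EReal` with `f x ≠ ⊥`).  Given
`x₀ ∈ dom f`, `ε > 0`, `λ > 0` and `x₀* ∈ ∂_ε f(x₀)`, there are `x ∈ dom f` and `x* ∈ ∂f(x)`
with `‖x - x₀‖ ≤ ε / λ` and `‖x* - x₀*‖ ≤ λ`.  In particular `D(∂f)` is dense in `dom f`: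
the closures of `D(∂f)` and of `dom f` coincide, and this common closure is convex. -/
theorem brondsted_rockafellar
    {E : Type*} [NormedAddCommGroup E] [NormedSpace ℝ E] [CompleteSpace E]
    (f : E → EReal)
    (hbot : ∀ x, f x ≠ ⊥) (hproper : ∃ x, f x ≠ ⊤)
    (hlsc : LowerSemicontinuous f)
    (hconv : ∀ x y : E, ∀ a b : ℝ, 0 ≤ a → 0 ≤ b → a + b = 1 →
      f (a • x + b • y) ≤ (a : EReal) * f x + (b : EReal) * f y)
    (x₀ : E) (hx₀ : f x₀ ≠ ⊤) (ε lam : ℝ) (hε : 0 < ε) (hlam : 0 < lam)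
    (x₀' : StrongDual ℝ E)
    (hx₀' : ∀ y, ((x₀' (y - x₀) : ℝ) : EReal) + f x₀ ≤ f y + (ε : EReal)) :
    (∃ (x : E) (x' : StrongDual ℝ E), f x ≠ ⊤ ∧
      (∀ y, ((x' (y - x) : ℝ) : EReal) + f x ≤ f y) ∧
      ‖x - x₀‖ ≤ ε / lam ∧ ‖x' - x₀'‖ ≤ lam) ∧
    closure {x | ∃ x' : StrongDual ℝ E, ∀ y, ((x' (y - x) : ℝ) : EReal) + f x ≤ f y}
      = closure {x | f x ≠ ⊤} ∧
    Convex ℝ (closure {x | f x ≠ ⊤}) :=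
  brondsted_rockafellar_general f hbot hlsc hconv x₀ hx₀ ε lam hlam x₀' hx₀'
end

section
/- Let f and g be proper lower semicontinuous convex functions on a real Banach space E and suppose there is a point of dom(f) ∩ dom(g) at which f is continuous. Then ∂(f + g)(x) = ∂f(x) + ∂g(x) for every x ∈ E, where ∂f(x) + ∂g(x) denotes the vector sum {x* + y* : x* ∈ ∂f(x), y* ∈ ∂g(x)}. -/
open NormedSpace Pointwise

/-!
Let `x'` be a subgradient of `f + g` at `x`. In `E × ℝ`, the strict epigraph of `f` is convex with
nonempty interior (as `f` is continuous at `x₀`) and is disjoint from the convex set lying below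
the graph of `z ↦ x' (z - x) + f x + g x - g z`; Hahn–Banach separates them. Because `x₀` lies in
both domains, the separating hyperplane is not vertical, so it is the graph of a continuous affine
function squeezed between `f` and that concave function. Its linear part `φ` is a subgradient of
`f` at `x`, and `x' - φ` one of `g`.
-/

-- Mathlib's `ConvexOn` needs a module as codomain, which `EReal` is not.
def EConvex {E : Type*} [AddCommGroup E] [Module ℝ E] (f : E → EReal) : Prop :=
  ∀ x y : E, ∀ a b : ℝ, 0 ≤ a → 0 ≤ b → a + b = 1 →
    f (a • x + b • y) ≤ (a : EReal) * f x + (b : EReal) * f y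

namespace EConvex

variable {E F : Type*} [AddCommGroup E] [Module ℝ E] [AddCommGroup F] [Module ℝ F]
  {f : E → EReal}

theorem apply_combo_le (hf : EConvex f) {x y : E} {s t : ℝ} (hx : f x ≤ s) (hy : f y ≤ t)
    {a b : ℝ} (ha : 0 ≤ a) (hb : 0 ≤ b) (hab : a + b = 1) :
    f (a • x + b • y) ≤ ((a * s + b * t : ℝ) : EReal) :=
  calc f (a • x + b • y) ≤ (a : EReal) * f x + (b : EReal) * f y := hf x y a b ha hb hab
    _ ≤ (a : EReal) * s + (b : EReal) * t := by gcongr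
    _ = ((a * s + b * t : ℝ) : EReal) := by push_cast; rfl

theorem convex_setOf_le_comp (hf : EConvex f) (L : F →ᵃ[ℝ] E) (M : F →ᵃ[ℝ] ℝ) :
    Convex ℝ {p | f (L p) ≤ M p} := by
  intro p hp q hq a b ha hb hab
  simp only [Set.mem_ofPred_eq, Convex.combo_affine_apply hab, smul_eq_mul] at hp hq ⊢
  exact hf.apply_combo_le hp hq ha hb hab

theorem convex_setOf_lt_comp (hf : EConvex f) (L : F →ᵃ[ℝ] E) (M : F →ᵃ[ℝ] ℝ) :
    Convex ℝ {p | f (L p) < M p} := by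
  intro p hp q hq a b ha hb hab
  obtain ⟨s, hfs, hs⟩ := EReal.lt_iff_exists_real_btwn.1 hp
  obtain ⟨t, hft, ht⟩ := EReal.lt_iff_exists_real_btwn.1 hq
  simp only [Set.mem_ofPred_eq, Convex.combo_affine_apply hab, smul_eq_mul]
  refine (hf.apply_combo_le hfs.le hft.le ha hb hab).trans_lt (EReal.coe_lt_coe_iff.2 ?_)
  rw [EReal.coe_lt_coe_iff] at hs ht
  rcases ha.eq_or_lt with rfl | ha
  · rw [zero_add] at hab
    simpa [hab] using ht
  · nlinarith [mul_lt_mul_of_pos_left hs ha, mul_le_mul_of_nonneg_left ht.le hb]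

end EConvex

theorem mem_interior_setOf_lt_snd {X : Type*} [TopologicalSpace X] {f : X → EReal} {x₀ : X}
    {t : ℝ} (hf : ContinuousAt f x₀) (ht : f x₀ < t) :
    (x₀, t) ∈ interior {p : X × ℝ | f p.1 < p.2} :=
  mem_interior_iff_mem_nhds.2 <| (hf.comp continuousAt_fst).eventually_lt
    (continuous_coe_real_ereal.continuousAt.comp continuousAt_snd) ht

theorem geometric_hahn_banach_of_mem_interior {X : Type*} [TopologicalSpace X] [AddCommGroup X]
    [Module ℝ X] [IsTopologicalAddGroup X] [ContinuousSMul ℝ X] {A B : Set X}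
    (hA : Convex ℝ A) (hB : Convex ℝ B) (hAB : Disjoint A B) {p₀ : X} (hp₀ : p₀ ∈ interior A) :
    ∃ (Φ : StrongDual ℝ X) (u : ℝ), Φ p₀ < u ∧ (∀ p ∈ A, Φ p ≤ u) ∧ ∀ p ∈ B, u ≤ Φ p := by
  obtain ⟨Φ, u, hΦA, hΦB⟩ :=
    geometric_hahn_banach_open hA.interior isOpen_interior hB (hAB.mono_left interior_subset)
  have hclosure : closure A ⊆ {p | Φ p ≤ u} := by
    rw [← hA.closure_interior_eq_closure_of_nonempty_interior ⟨p₀, hp₀⟩]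
    exact closure_minimal (fun p hp ↦ (hΦA p hp).le) (isClosed_le Φ.continuous continuous_const)
  exact ⟨Φ, u, hΦA p₀ hp₀, fun p hp ↦ hclosure (subset_closure hp), hΦB⟩

section NormedSpace

variable {E : Type*} [NormedAddCommGroup E] [NormedSpace ℝ E]

def subdifferential (f : E → EReal) (x : E) : Set (StrongDual ℝ E) :=
  {x' | ∀ y, ((x' (y - x) : ℝ) : EReal) + f x ≤ f y}

theorem EConvex.exists_nonvertical_separation {f g : E → EReal} (hf : EConvex f)
    (hg : EConvex g) {x₀ : E} (hcont : ContinuousAt f x₀) (hfx₀ : f x₀ ≠ ⊤) (hgx₀ : g x₀ ≠ ⊤)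
    (ℓ : StrongDual ℝ E) (c : ℝ) (hfg : ∀ z, ((ℓ z + c : ℝ) : EReal) ≤ f z + g z) :
    ∃ (ψ : StrongDual ℝ E) (k u : ℝ), k < 0 ∧ (∀ z (t : ℝ), f z < t → ψ z + t * k ≤ u) ∧
      ∀ z (t : ℝ), g z ≤ ((ℓ z - t + c : ℝ) : EReal) → u ≤ ψ z + t * k := by
  set A := {p : E × ℝ | f p.1 < p.2}
  set B := {p : E × ℝ | g p.1 ≤ ((ℓ p.1 - p.2 + c : ℝ) : EReal)}
  have hA : Convex ℝ A := hf.convex_setOf_lt_comp (LinearMap.fst ℝ E ℝ).toAffineMap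
    (LinearMap.snd ℝ E ℝ).toAffineMap
  have hB : Convex ℝ B := hg.convex_setOf_le_comp (LinearMap.fst ℝ E ℝ).toAffineMap
    (((ℓ : E →ₗ[ℝ] ℝ).comp (LinearMap.fst ℝ E ℝ) - LinearMap.snd ℝ E ℝ).toAffineMap +
      AffineMap.const ℝ (E × ℝ) c)
  have hAB : Disjoint A B := Set.disjoint_left.2 fun p hpA hpB ↦ by
    have := EReal.add_lt_add_of_lt_of_le' hpA hpB (EReal.coe_ne_bot _)
      fun h ↦ absurd h (EReal.coe_ne_top _)
    rw [← EReal.coe_add, show p.2 + (ℓ p.1 - p.2 + c) = ℓ p.1 + c by ring] at this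
    exact (hfg p.1).not_gt this
  obtain ⟨hfx₀', hgx₀'⟩ :=
    EReal.add_ne_bot_iff.1 (ne_bot_of_le_ne_bot (EReal.coe_ne_bot _) (hfg x₀))
  obtain ⟨a₀, ha₀⟩ : ∃ a₀ : ℝ, f x₀ = a₀ := ⟨_, (EReal.coe_toReal hfx₀ hfx₀').symm⟩
  obtain ⟨b₀, hb₀⟩ : ∃ b₀ : ℝ, g x₀ = b₀ := ⟨_, (EReal.coe_toReal hgx₀ hgx₀').symm⟩
  have hx₀A : (x₀, a₀ + 1) ∈ interior A :=
    mem_interior_setOf_lt_snd hcont (by rw [ha₀, EReal.coe_lt_coe_iff]; linarith)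
  have hx₀B : (x₀, ℓ x₀ + c - b₀) ∈ B := by
    simp only [B, Set.mem_ofPred_eq, hb₀, EReal.coe_le_coe_iff]
    linarith
  obtain ⟨Φ, u, hΦx₀, hΦA, hΦB⟩ := geometric_hahn_banach_of_mem_interior hA hB hAB hx₀A
  set ψ := Φ.comp (ContinuousLinearMap.inl ℝ E ℝ)
  have hΦ : ∀ z t, Φ (z, t) = ψ z + t * Φ (0, 1) := fun z t ↦ by
    rw [show (z, t) = (z, 0) + t • ((0 : E), (1 : ℝ)) by simp, map_add, map_smul, smul_eq_mul]
    rfl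
  refine ⟨ψ, Φ (0, 1), u, ?_, fun z t h ↦ hΦ z t ▸ hΦA (z, t) h,
    fun z t h ↦ hΦ z t ▸ hΦB (z, t) h⟩
  -- `Φ < u` at `(x₀, a₀ + 1)` but `u ≤ Φ` at the lower point `(x₀, ℓ x₀ + c - b₀)`.
  have hbelow : ℓ x₀ + c ≤ a₀ + b₀ := by simpa [ha₀, hb₀, ← EReal.coe_add] using hfg x₀
  have hB₀ := hΦB _ hx₀B
  rw [hΦ] at hΦx₀ hB₀
  nlinarith

theorem EConvex.exists_affine_sandwich {f g : E → EReal} (hf : EConvex f) (hg : EConvex g)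
    {x₀ : E} (hcont : ContinuousAt f x₀) (hfx₀ : f x₀ ≠ ⊤) (hgx₀ : g x₀ ≠ ⊤)
    (ℓ : StrongDual ℝ E) (c : ℝ) (hfg : ∀ z, ((ℓ z + c : ℝ) : EReal) ≤ f z + g z) :
    ∃ (φ : StrongDual ℝ E) (a : ℝ), ∀ z,
      ((φ z + a : ℝ) : EReal) ≤ f z ∧ ((ℓ z + c - (φ z + a) : ℝ) : EReal) ≤ g z := by
  obtain ⟨ψ, k, u, hk, hA, hB⟩ := hf.exists_nonvertical_separation hg hcont hfx₀ hgx₀ ℓ c hfg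
  have hval : ∀ z, (-k⁻¹ • ψ) z + u / k = (u - ψ z) / k := fun z ↦ by
    rw [smul_apply, smul_eq_mul]
    ring
  refine ⟨-k⁻¹ • ψ, u / k, fun z ↦ ⟨EReal.le_of_forall_lt_iff_le.1 fun t ht ↦ ?_,
    EReal.le_of_forall_lt_iff_le.1 fun s hs ↦ ?_⟩⟩
  · have := hA z t ht
    rw [EReal.coe_le_coe_iff, hval, div_le_iff_of_neg hk]
    linarith
  · have := hB z (ℓ z + c - s) (by rw [show ℓ z - (ℓ z + c - s) + c = s by ring]; exact hs.le)
    rw [EReal.coe_le_coe_iff, hval, sub_le_comm, le_div_iff_of_neg hk]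
    linarith

theorem subset_subdifferential_add (f g : E → EReal) (x : E) :
    subdifferential f x + subdifferential g x ⊆ subdifferential (f + g) x := by
  rintro _ ⟨a, ha, b, hb, rfl⟩ y
  rw [add_apply, EReal.coe_add, Pi.add_apply, Pi.add_apply, add_add_add_comm]
  exact add_le_add (ha y) (hb y)

theorem ne_top_of_mem_subdifferential {h : E → EReal} {x y : E} {x' : StrongDual ℝ E}
    (hx' : x' ∈ subdifferential h x) (hy : h y ≠ ⊤) : h x ≠ ⊤ := by
  intro hx
  have := hx' y
  rw [hx, EReal.coe_add_top, top_le_iff] at this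
  exact hy this

theorem EConvex.subdifferential_add_subset {f g : E → EReal} (hf : EConvex f) (hg : EConvex g)
    (hfbot : ∀ x, f x ≠ ⊥) (hgbot : ∀ x, g x ≠ ⊥) {x₀ : E} (hcont : ContinuousAt f x₀)
    (hfx₀ : f x₀ ≠ ⊤) (hgx₀ : g x₀ ≠ ⊤) (x : E) :
    subdifferential (f + g) x ⊆ subdifferential f x + subdifferential g x := by
  intro x' hx'
  obtain ⟨hfx, hgx⟩ := (EReal.add_ne_top_iff_ne_top₂ (hfbot x) (hgbot x)).1 <|
    ne_top_of_mem_subdifferential (h := f + g) hx' (EReal.add_ne_top hfx₀ hgx₀)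
  obtain ⟨a₀, ha₀⟩ : ∃ a₀ : ℝ, f x = a₀ := ⟨_, (EReal.coe_toReal hfx (hfbot x)).symm⟩
  obtain ⟨b₀, hb₀⟩ : ∃ b₀ : ℝ, g x = b₀ := ⟨_, (EReal.coe_toReal hgx (hgbot x)).symm⟩
  obtain ⟨φ, a, hφ⟩ := hf.exists_affine_sandwich hg hcont hfx₀ hgx₀ x' (a₀ + b₀ - x' x)
    fun z ↦ by
      have := hx' z
      rw [Pi.add_apply, Pi.add_apply, ha₀, hb₀, ← EReal.coe_add, ← EReal.coe_add] at this
      convert this using 2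
      rw [map_sub]
      ring
  have ha : φ x + a = a₀ := by
    have := hφ x
    simp only [ha₀, hb₀, EReal.coe_le_coe_iff] at this
    linarith
  refine ⟨φ, fun y ↦ ?_, x' - φ, fun y ↦ ?_, add_sub_cancel φ x'⟩
  · rw [ha₀, ← EReal.coe_add, map_sub, ← ha, show φ y - φ x + (φ x + a) = φ y + a by ring]
    exact (hφ y).1
  · rw [hb₀, ← EReal.coe_add]
    convert (hφ y).2 using 2
    rw [sub_apply, map_sub, map_sub]
    linarith

end NormedSpace

theorem subdifferential_sum_rule_general
    {E : Type*} [NormedAddCommGroup E] [NormedSpace ℝ E]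
    (f g : E → EReal)
    (hfbot : ∀ x, f x ≠ ⊥)
    (hfconv : ∀ x y : E, ∀ a b : ℝ, 0 ≤ a → 0 ≤ b → a + b = 1 →
      f (a • x + b • y) ≤ (a : EReal) * f x + (b : EReal) * f y)
    (hgbot : ∀ x, g x ≠ ⊥)
    (hgconv : ∀ x y : E, ∀ a b : ℝ, 0 ≤ a → 0 ≤ b → a + b = 1 →
      g (a • x + b • y) ≤ (a : EReal) * g x + (b : EReal) * g y)
    (x₀ : E) (hx₀f : f x₀ ≠ ⊤) (hx₀g : g x₀ ≠ ⊤) (hcont : ContinuousAt f x₀) :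
    ∀ x : E,
      {x' : StrongDual ℝ E | ∀ y, ((x' (y - x) : ℝ) : EReal) + (f x + g x) ≤ f y + g y}
        = {x' : StrongDual ℝ E | ∀ y, ((x' (y - x) : ℝ) : EReal) + f x ≤ f y}
          + {x' : StrongDual ℝ E | ∀ y, ((x' (y - x) : ℝ) : EReal) + g x ≤ g y} := fun x ↦
  (EConvex.subdifferential_add_subset hfconv hgconv hfbot hgbot hcont hx₀f hx₀g x).antisymm
    (subset_subdifferential_add f g x)

/-- Sum rule for subdifferentials: if `f` and `g` are proper lower semicontinuous convex
functions on a real Banach space `E` and `f` is continuous at some point of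
`dom f ∩ dom g`, then `∂(f + g)(x) = ∂f(x) + ∂g(x)` (Minkowski sum) for every `x ∈ E`. -/
theorem subdifferential_sum_rule
    {E : Type*} [NormedAddCommGroup E] [NormedSpace ℝ E] [CompleteSpace E]
    (f g : E → EReal)
    (hfbot : ∀ x, f x ≠ ⊥) (hfproper : ∃ x, f x ≠ ⊤)
    (hflsc : LowerSemicontinuous f)
    (hfconv : ∀ x y : E, ∀ a b : ℝ, 0 ≤ a → 0 ≤ b → a + b = 1 →
      f (a • x + b • y) ≤ (a : EReal) * f x + (b : EReal) * f y)
    (hgbot : ∀ x, g x ≠ ⊥) (hgproper : ∃ x, g x ≠ ⊤)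
    (hglsc : LowerSemicontinuous g)
    (hgconv : ∀ x y : E, ∀ a b : ℝ, 0 ≤ a → 0 ≤ b → a + b = 1 →
      g (a • x + b • y) ≤ (a : EReal) * g x + (b : EReal) * g y)
    (x₀ : E) (hx₀f : f x₀ ≠ ⊤) (hx₀g : g x₀ ≠ ⊤) (hcont : ContinuousAt f x₀) :
    ∀ x : E,
      {x' : StrongDual ℝ E | ∀ y, ((x' (y - x) : ℝ) : EReal) + (f x + g x) ≤ f y + g y}
        = {x' : StrongDual ℝ E | ∀ y, ((x' (y - x) : ℝ) : EReal) + f x ≤ f y}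
          + {x' : StrongDual ℝ E | ∀ y, ((x' (y - x) : ℝ) : EReal) + g x ≤ g y} :=
  subdifferential_sum_rule_general f g hfbot hfconv hgbot hgconv x₀ hx₀f hx₀g hcont
end

section
/- Let f be a proper lower semicontinuous convex function on a real Banach space E and let x ∈ E (not necessarily in dom(f)) satisfy inf_E f < f(x). Then there exist z ∈ dom(f) and z* ∈ ∂f(z) such that f(z) < f(x) and ⟨z*, x − z⟩ > 0. -/
/-!
Pick `x₀` with `f x₀ < f x`. Since `f` has a continuous affine minorant, adding to `f` a convex
penalty `ρ ≥ θ‖· - x‖` that vanishes at `x` gives a function bounded below, and Ekeland's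
principle yields a point `z` with `f z + ρ z ≤ f x₀ + ρ x₀` at which `f + ρ + (θ/2)‖· - z‖` is
minimal. Separating the epigraph of `f` from the strict hypograph of `f z + ρ z - ρ - (θ/2)‖· - z‖`
turns this minimality into a subgradient `z*` of `f` at `z` with
`ρ z - ρ x - (θ/2)‖x - z‖ ≤ ⟨z*, x - z⟩`, and the left side is at least `(θ/2)‖x - z‖ > 0`.
For `θ` small, `f z < f x`.
-/

open Set Filter Topology

section Ekeland

variable {X : Type*} [PseudoMetricSpace X] {H : X → ℝ} {k : ℝ}

def ekelandSet (H : X → ℝ) (k : ℝ) (w : X) : Set X := {y | H y + k * dist y w ≤ H w}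

lemma mem_ekelandSet_self (w : X) : w ∈ ekelandSet H k w := by simp [ekelandSet]

lemma ekelandSet_subset (hk : 0 ≤ k) {w y : X} (hy : y ∈ ekelandSet H k w) :
    ekelandSet H k y ⊆ ekelandSet H k w := by
  intro u hu
  simp only [ekelandSet, mem_ofPred_eq] at hy hu ⊢
  nlinarith [dist_triangle u y w]

lemma isClosed_ekelandSet (hH : LowerSemicontinuous H) (w : X) :
    IsClosed (ekelandSet H k w) :=
  (hH.add (by fun_prop : Continuous fun y => k * dist y w).lowerSemicontinuous).isClosed_preimage
    (H w)

lemma exists_mem_ekelandSet_forall_le_add (hH : BddBelow (range H)) (w : X) {ε : ℝ}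
    (hε : 0 < ε) : ∃ y ∈ ekelandSet H k w, ∀ u ∈ ekelandSet H k w, H y ≤ H u + ε := by
  have hne : (H '' ekelandSet H k w).Nonempty := ⟨H w, w, mem_ekelandSet_self w, rfl⟩
  have hbdd : BddBelow (H '' ekelandSet H k w) := hH.mono (image_subset_range _ _)
  obtain ⟨_, ⟨y, hy, rfl⟩, hlt⟩ := exists_lt_of_csInf_lt hne (lt_add_of_pos_right _ hε)
  exact ⟨y, hy, fun u hu => by linarith [csInf_le hbdd (mem_image_of_mem H hu)]⟩

lemma le_add_and_mul_dist_le_of_mem_ekelandSet (hk : 0 ≤ k) {w y u : X} {ε : ℝ}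
    (hy : y ∈ ekelandSet H k w) (hmin : ∀ u ∈ ekelandSet H k w, H y ≤ H u + ε)
    (hu : u ∈ ekelandSet H k y) : H y ≤ H u + ε ∧ k * dist u y ≤ ε := by
  have := hmin u (ekelandSet_subset hk hy hu)
  simp only [ekelandSet, mem_ofPred_eq] at hu
  constructor <;> linarith

theorem LowerSemicontinuous.ekeland [CompleteSpace X] (hH : LowerSemicontinuous H)
    (hbdd : BddBelow (range H)) (hk : 0 < k) (x₀ : X) :
    ∃ z, H z + k * dist z x₀ ≤ H x₀ ∧ ∀ y, H z ≤ H y + k * dist y z := by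
  set ε : ℕ → ℝ := fun n => k / (n + 1)
  choose next hnext_mem hnext_min using fun n (w : X) =>
    exists_mem_ekelandSet_forall_le_add (k := k) hbdd w (ε := ε n) (by positivity)
  let w : ℕ → X := fun n => Nat.rec x₀ (fun n w => next n w) n
  have hanti : Antitone fun n => ekelandSet H k (w n) :=
    antitone_nat_of_succ_le fun n => ekelandSet_subset hk.le (hnext_mem n (w n))
  have hsmall : ∀ n, ∀ u ∈ ekelandSet H k (w (n + 1)),
      H (w (n + 1)) ≤ H u + ε n ∧ dist u (w (n + 1)) ≤ 1 / (n + 1) := by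
    intro n u hu
    obtain ⟨hle, hdist⟩ :=
      le_add_and_mul_dist_le_of_mem_ekelandSet hk.le (hnext_mem n (w n)) (hnext_min n _) hu
    refine ⟨hle, le_of_mul_le_mul_left ?_ hk⟩
    simpa [ε, div_eq_mul_one_div k] using hdist
  have hcauchy : CauchySeq fun n => w (n + 1) := by
    refine cauchySeq_of_le_tendsto_0' (fun n : ℕ => 1 / ((n : ℝ) + 1)) (fun n m hnm => ?_)
      tendsto_one_div_add_atTop_nhds_zero_nat
    rw [dist_comm]
    exact (hsmall n _ (hanti (Nat.succ_le_succ hnm) (mem_ekelandSet_self _))).2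
  obtain ⟨z, hz⟩ := cauchySeq_tendsto_of_complete hcauchy
  have hz_mem : ∀ n, z ∈ ekelandSet H k (w n) := fun n =>
    (isClosed_ekelandSet hH _).mem_of_tendsto hz <| (eventually_ge_atTop n).mono
      fun m hm => hanti (hm.trans (Nat.le_succ m)) (mem_ekelandSet_self _)
  refine ⟨z, hz_mem 0, fun y => ?_⟩
  by_cases hy : y ∈ ekelandSet H k z
  · have hε : Tendsto (fun n => H y + ε n) atTop (𝓝 (H y)) := by
      simpa using tendsto_const_nhds.add
        ((tendsto_const_div_atTop_nhds_zero_nat k).comp (tendsto_add_atTop_nat 1))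
    have hzy : H z ≤ H y := ge_of_tendsto hε <| Eventually.of_forall fun n => by
      have hzn : H z + k * dist z (w (n + 1)) ≤ H (w (n + 1)) := hz_mem (n + 1)
      have hyn := (hsmall n y (ekelandSet_subset hk.le (hz_mem (n + 1)) hy)).1
      nlinarith [dist_nonneg (x := z) (y := w (n + 1))]
    nlinarith [dist_nonneg (x := y) (y := z)]
  · simp only [ekelandSet, mem_ofPred_eq, not_le] at hy
    exact hy.le

end Ekeland

theorem LowerSemicontinuous.ekeland_ereal {X : Type*} [PseudoMetricSpace X] [CompleteSpace X]
    {H : X → EReal} (hH : LowerSemicontinuous H) {C : ℝ} (hC : ∀ y, (C : EReal) ≤ H y)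
    {k : ℝ} (hk : 0 < k) {x₀ : X} (hx₀ : H x₀ ≠ ⊤) :
    ∃ z, H z + (k * dist z x₀ : ℝ) ≤ H x₀ ∧ ∀ y, H z ≤ H y + (k * dist y z : ℝ) := by
  have hbot : ∀ y, H y ≠ ⊥ := fun y => ((EReal.bot_lt_coe C).trans_le (hC y)).ne'
  set a := (H x₀).toReal
  have ha : H x₀ = a := (EReal.coe_toReal hx₀ (hbot x₀)).symm
  -- truncating `H` at a level above `H x₀` makes it real-valued without moving the points found
  set G : X → ℝ := fun y => (min (H y) (a + 1 : ℝ)).toReal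
  have hG : ∀ y, (G y : EReal) = min (H y) (a + 1 : ℝ) := fun y =>
    EReal.coe_toReal ((min_le_right _ _).trans_lt (EReal.coe_lt_top _)).ne
      (lt_min (hbot y).bot_lt (EReal.bot_lt_coe _)).ne'
  have hG_lsc : LowerSemicontinuous G := by
    intro y t (ht : t < G y)
    rw [← EReal.coe_lt_coe_iff, hG, lt_min_iff] at ht
    filter_upwards [hH y t ht.1] with y' hy'
    change t < G y'
    rw [← EReal.coe_lt_coe_iff, hG]
    exact lt_min hy' ht.2
  have hG_bdd : BddBelow (range G) := by
    refine ⟨C, ?_⟩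
    rintro _ ⟨y, rfl⟩
    rw [← EReal.coe_le_coe_iff, hG]
    exact le_min (hC y) ((hC x₀).trans (by rw [ha]; exact_mod_cast (lt_add_one a).le))
  have hGx₀ : G x₀ = a := by
    rw [← EReal.coe_eq_coe_iff, hG, ha]
    exact min_eq_left (by exact_mod_cast (lt_add_one a).le)
  obtain ⟨z, hz₀, hz⟩ := hG_lsc.ekeland hG_bdd hk x₀
  have hHz : H z = G z := by
    have : G z < a + 1 := by nlinarith [dist_nonneg (x := z) (y := x₀)]
    rw [hG, min_eq_left]
    rw [← EReal.coe_lt_coe_iff, hG, min_lt_iff] at this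
    exact this.resolve_right (lt_irrefl _) |>.le
  refine ⟨z, ?_, fun y => ?_⟩
  · rw [hHz, ha]
    exact_mod_cast hz₀.trans_eq hGx₀
  · calc H z = ((G z : ℝ) : EReal) := hHz
      _ ≤ ((G y + k * dist y z : ℝ) : EReal) := by exact_mod_cast hz y
      _ = min (H y) (a + 1 : ℝ) + (k * dist y z : ℝ) := by rw [EReal.coe_add, hG]
      _ ≤ H y + (k * dist y z : ℝ) := by gcongr; exact min_le_left _ _

section Epigraph

variable {E : Type*}

def epigraph (f : E → EReal) : Set (E × ℝ) := {p | f p.1 ≤ p.2}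

lemma coe_le_of_forall_mem_epigraph {f : E → EReal} {y : E} {a : ℝ}
    (h : ∀ t : ℝ, (y, t) ∈ epigraph f → a ≤ t) : (a : EReal) ≤ f y :=
  EReal.le_of_forall_lt_iff_le.1 fun t ht => by exact_mod_cast h t ht.le

lemma convex_epigraph [AddCommGroup E] [Module ℝ E] {f : E → EReal}
    (hf : ∀ x y : E, ∀ a b : ℝ, 0 ≤ a → 0 ≤ b → a + b = 1 →
      f (a • x + b • y) ≤ (a : EReal) * f x + (b : EReal) * f y) :
    Convex ℝ (epigraph f) := by
  intro p (hp : f p.1 ≤ p.2) q (hq : f q.1 ≤ q.2) a b ha hb hab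
  calc f (a • p.1 + b • q.1) ≤ (a : EReal) * f p.1 + (b : EReal) * f q.1 := hf _ _ a b ha hb hab
    _ ≤ (a : EReal) * p.2 + (b : EReal) * q.2 := by gcongr
    _ = ((a * p.2 + b * q.2 : ℝ) : EReal) := by push_cast; rfl

lemma isClosed_epigraph [TopologicalSpace E] {f : E → EReal} (hf : LowerSemicontinuous f) :
    IsClosed (epigraph f) :=
  hf.isClosed_epigraph.preimage (continuous_id.prodMap continuous_coe_real_ereal)

end Epigraph

section Separation

variable {E : Type*} [NormedAddCommGroup E] [NormedSpace ℝ E]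

lemma apply_mk_sub_apply_mk (F : E × ℝ →L[ℝ] ℝ) (y : E) (s t : ℝ) :
    F (y, t) - F (y, s) = (t - s) * F (0, 1) := by
  rw [← map_sub, ← smul_eq_mul, ← map_smul]
  simp

lemma exists_le_apply_iff (F : E × ℝ →L[ℝ] ℝ) (hF : 0 < F (0, 1)) (u : ℝ) :
    ∃ (v : StrongDual ℝ E) (m : ℝ), ∀ y t, u ≤ F (y, t) ↔ v y + m ≤ t := by
  refine ⟨-(F (0, 1))⁻¹ • F.comp (.inl ℝ E ℝ), u / F (0, 1), fun y t => ?_⟩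
  have hFyt := apply_mk_sub_apply_mk F y 0 t
  have hv : (-(F (0, 1))⁻¹ • F.comp (.inl ℝ E ℝ)) y + u / F (0, 1) = (u - F (y, 0)) / F (0, 1) := by
    simp only [smul_apply, ContinuousLinearMap.comp_apply, ContinuousLinearMap.inl_apply,
      smul_eq_mul]
    ring
  rw [hv, div_le_iff₀ hF]
  constructor <;> intro <;> linarith

theorem exists_affine_le {f : E → EReal} (hf : Convex ℝ (epigraph f))
    (hf_closed : IsClosed (epigraph f)) {x₁ : E} (hx₁_top : f x₁ ≠ ⊤) (hx₁_bot : f x₁ ≠ ⊥) :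
    ∃ (v : StrongDual ℝ E) (m : ℝ), ∀ y, ((v y + m : ℝ) : EReal) ≤ f y := by
  obtain ⟨s, -, hs⟩ := EReal.exists_between_coe_real hx₁_bot.bot_lt
  obtain ⟨t, ht, -⟩ := EReal.exists_between_coe_real hx₁_top.lt_top
  have hout : (x₁, s) ∉ epigraph f := not_le.2 hs
  obtain ⟨F, u, hF_epi, hF_out⟩ := geometric_hahn_banach_closed_point hf hf_closed hout
  have hpos : 0 < (-F) (0, 1) := by
    have hst : s < t := EReal.coe_lt_coe_iff.1 (hs.trans ht)
    have := hF_epi (x₁, t) ht.le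
    have := apply_mk_sub_apply_mk F x₁ s t
    simp only [neg_apply, neg_pos]
    nlinarith
  obtain ⟨v, m, hvm⟩ := exists_le_apply_iff (-F) hpos (-u)
  exact ⟨v, m, fun y => coe_le_of_forall_mem_epigraph fun t ht =>
    (hvm y t).1 (neg_le_neg (hF_epi _ ht).le)⟩

theorem exists_affine_between {f : E → EReal} {g : E → ℝ} (hf : Convex ℝ (epigraph f))
    (hg : ConcaveOn ℝ univ g) (hg_cont : Continuous g) (hgf : ∀ y, (g y : EReal) ≤ f y)
    {z : E} (hz : f z ≠ ⊤) :
    ∃ (v : StrongDual ℝ E) (m : ℝ), ∀ y, g y ≤ v y + m ∧ ((v y + m : ℝ) : EReal) ≤ f y := by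
  set A : Set (E × ℝ) := {p | p.2 < g p.1}
  have hA_conv : Convex ℝ A := by simpa using hg.convex_strict_hypograph
  have hA_open : IsOpen A := isOpen_lt continuous_snd (hg_cont.comp continuous_fst)
  have hdisj : Disjoint A (epigraph f) := by
    refine disjoint_left.2 fun p (hpA : p.2 < g p.1) (hp : f p.1 ≤ p.2) => ?_
    exact (hgf p.1).not_gt (hp.trans_lt (by exact_mod_cast hpA))
  obtain ⟨F, u, hF_A, hF_epi⟩ := geometric_hahn_banach_open hA_conv hA_open hf hdisj
  obtain ⟨t, ht, -⟩ := EReal.exists_between_coe_real hz.lt_top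
  have hpos : 0 < F (0, 1) := by
    have hgt : g z - 1 < t := by
      have : (g z : EReal) < t := (hgf z).trans_lt ht
      linarith [EReal.coe_lt_coe_iff.1 this]
    have := hF_A (z, g z - 1) (sub_one_lt (g z))
    have := hF_epi (z, t) ht.le
    have := apply_mk_sub_apply_mk F z (g z - 1) t
    nlinarith
  obtain ⟨v, m, hvm⟩ := exists_le_apply_iff F hpos u
  refine ⟨v, m, fun y => ⟨le_of_forall_lt fun t ht => ?_, ?_⟩⟩
  · exact not_le.1 fun h => ((hvm y t).2 h).not_gt (hF_A (y, t) ht)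
  · exact coe_le_of_forall_mem_epigraph fun t ht => (hvm y t).1 (hF_epi _ ht)

end Separation

section Subgradient

variable {E : Type*} [NormedAddCommGroup E] [NormedSpace ℝ E]

def IsSubgradientAt (f : E → EReal) (v : StrongDual ℝ E) (z : E) : Prop :=
  ∀ y, ((v (y - z) : ℝ) : EReal) + f z ≤ f y

theorem exists_subgradient_of_forall_le_add {f : E → EReal} (hf : Convex ℝ (epigraph f))
    {ρ : E → ℝ} (hρ : ConvexOn ℝ univ ρ) (hρ_cont : Continuous ρ) {z : E} {a : ℝ}
    (hz : f z = a) (hmin : ∀ y, f z + ρ z ≤ f y + ρ y) :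
    ∃ v, IsSubgradientAt f v z ∧ ∀ y, ρ z - ρ y ≤ v (y - z) := by
  have hg : ConcaveOn ℝ univ fun y => a + ρ z - ρ y := (concaveOn_const _ convex_univ).sub hρ
  have hgf : ∀ y, ((a + ρ z - ρ y : ℝ) : EReal) ≤ f y := fun y => by
    rw [EReal.coe_sub, EReal.sub_le_iff_le_add (.inl (EReal.coe_ne_bot _))
      (.inl (EReal.coe_ne_top _)), EReal.coe_add, ← hz]
    exact hmin y
  obtain ⟨v, m, hvm⟩ := exists_affine_between hf hg (by fun_prop) hgf (hz ▸ EReal.coe_ne_top a)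
  have hm : v z + m = a := le_antisymm (by exact_mod_cast hz ▸ (hvm z).2) (by simpa using (hvm z).1)
  refine ⟨v, fun y => ?_, fun y => ?_⟩
  · rw [hz, ← EReal.coe_add, map_sub]
    convert (hvm y).2 using 2
    linarith
  · linarith [(hvm y).1, map_sub v y z]

theorem exists_subgradient_of_bddBelow_add [CompleteSpace E] {f : E → EReal}
    (hf : Convex ℝ (epigraph f)) (hf_lsc : LowerSemicontinuous f) {ρ : E → ℝ}
    (hρ : ConvexOn ℝ univ ρ) (hρ_cont : Continuous ρ) {C : ℝ} (hC : ∀ y, (C : EReal) ≤ f y + ρ y)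
    {x₀ : E} (hx₀ : f x₀ ≠ ⊤) {k : ℝ} (hk : 0 < k) :
    ∃ z v, IsSubgradientAt f v z ∧ f z + ρ z ≤ f x₀ + ρ x₀ ∧
      ∀ y, ρ z - ρ y - k * dist y z ≤ v (y - z) := by
  have hlsc : LowerSemicontinuous fun y => f y + ρ y :=
    hf_lsc.add' (continuous_coe_real_ereal.comp hρ_cont).lowerSemicontinuous fun y =>
      EReal.continuousAt_add (.inr (EReal.coe_ne_bot _)) (.inr (EReal.coe_ne_top _))
  obtain ⟨z, hz₀, hz⟩ := hlsc.ekeland_ereal hC hk (EReal.add_ne_top hx₀ (EReal.coe_ne_top _))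
  have hzx₀ : f z + ρ z ≤ f x₀ + ρ x₀ :=
    (le_add_of_nonneg_right (by exact_mod_cast by positivity)).trans hz₀
  have hz_top : f z ≠ ⊤ := fun h => by
    rw [h, EReal.top_add_coe, top_le_iff] at hzx₀
    exact EReal.add_ne_top hx₀ (EReal.coe_ne_top _) hzx₀
  have hz_bot : f z ≠ ⊥ := fun h => by simpa [h] using hC z
  set ρ' : E → ℝ := fun y => ρ y + k * dist y z
  have hρ' : ConvexOn ℝ univ ρ' :=
    hρ.add ((convexOn_dist z convex_univ).smul hk.le)
  have hmin : ∀ y, f z + ρ' z ≤ f y + ρ' y := fun y => by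
    simpa [ρ', EReal.coe_add, add_assoc] using hz y
  obtain ⟨v, hv, hvρ⟩ := exists_subgradient_of_forall_le_add hf hρ' (by fun_prop)
    (EReal.coe_toReal hz_top hz_bot).symm hmin
  refine ⟨z, v, hv, hzx₀, fun y => ?_⟩
  simpa [ρ', sub_sub] using hvρ y

end Subgradient

theorem exists_subgradient_mul_dist_le_apply_sub {E : Type*} [NormedAddCommGroup E]
    [NormedSpace ℝ E] [CompleteSpace E] {f : E → EReal} (hf : Convex ℝ (epigraph f))
    (hf_lsc : LowerSemicontinuous f) {ψ : StrongDual ℝ E} {c : ℝ}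
    (hψ : ∀ y, ((ψ y + c : ℝ) : EReal) ≤ f y) {x₀ : E} (hx₀ : f x₀ ≠ ⊤) (x : E) {θ : ℝ}
    (hθ : 0 < θ) :
    ∃ z v, IsSubgradientAt f v z ∧ f z + (θ * dist z x : ℝ) ≤ f x₀ + (θ * dist x₀ x : ℝ) ∧
      θ / 2 * dist z x ≤ v (x - z) := by
  -- the second term is `≤ 0` at `x` and `x₀`, and it makes `f + ρ` bounded below
  set ρ : E → ℝ := fun y => max (θ * dist y x) (‖ψ‖ * (dist y x₀ - dist x x₀))
  have hρ : ConvexOn ℝ univ ρ :=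
    ((convexOn_dist x convex_univ).smul hθ.le).sup
      (((convexOn_dist x₀ convex_univ).sub (concaveOn_const _ convex_univ)).smul (norm_nonneg ψ))
  have hC : ∀ y, ((ψ x₀ + c - ‖ψ‖ * dist x x₀ : ℝ) : EReal) ≤ f y + ρ y := fun y => by
    have hψy : ψ x₀ - ψ y ≤ ‖ψ‖ * dist y x₀ :=
      (le_abs_self _).trans (by simpa [dist_comm, Real.dist_eq] using ψ.lipschitz.dist_le_mul y x₀)
    have hρy : ‖ψ‖ * (dist y x₀ - dist x x₀) ≤ ρ y := le_max_right _ _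
    calc ((ψ x₀ + c - ‖ψ‖ * dist x x₀ : ℝ) : EReal) ≤ ((ψ y + c : ℝ) : EReal) + ρ y := by
          rw [← EReal.coe_add]; exact_mod_cast by linarith
      _ ≤ f y + ρ y := by gcongr; exact hψ y
  obtain ⟨z, v, hv, hz, hvρ⟩ :=
    exists_subgradient_of_bddBelow_add hf hf_lsc hρ (by fun_prop) hC hx₀ (half_pos hθ)
  have hρz : θ * dist z x ≤ ρ z := le_max_left _ _
  have hρx : ρ x = 0 := by simp [ρ]
  have hρx₀ : ρ x₀ = θ * dist x₀ x := max_eq_left <| by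
    rw [dist_self, zero_sub, mul_neg]
    exact (neg_nonpos.2 (by positivity)).trans (by positivity)
  refine ⟨z, v, hv, ?_, ?_⟩
  · rw [← hρx₀]
    exact le_trans (by gcongr) hz
  · have := hvρ x
    rw [hρx, dist_comm] at this
    linarith

/-- If `f` is a proper lower semicontinuous convex function on a real Banach space `E` and
`x ∈ E` satisfies `inf_E f < f x`, then there exist `z ∈ dom f` and `z* ∈ ∂f(z)` with
`f z < f x` and `⟨z*, x - z⟩ > 0`. -/
theorem exists_subgradient_separating
    {E : Type*} [NormedAddCommGroup E] [NormedSpace ℝ E] [CompleteSpace E]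
    (f : E → EReal)
    (hbot : ∀ x, f x ≠ ⊥) (hproper : ∃ x, f x ≠ ⊤)
    (hlsc : LowerSemicontinuous f)
    (hconv : ∀ x y : E, ∀ a b : ℝ, 0 ≤ a → 0 ≤ b → a + b = 1 →
      f (a • x + b • y) ≤ (a : EReal) * f x + (b : EReal) * f y)
    (x : E) (hx : ⨅ y, f y < f x) :
    ∃ (z : E) (z' : StrongDual ℝ E), f z ≠ ⊤ ∧
      (∀ y, ((z' (y - z) : ℝ) : EReal) + f z ≤ f y) ∧
      f z < f x ∧ 0 < z' (x - z) := by
  obtain ⟨x₀, hx₀⟩ := iInf_lt_iff.1 hx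
  obtain ⟨r₂, hx₀r₂, hr₂x⟩ := EReal.exists_between_coe_real hx₀
  obtain ⟨r₁, hx₀r₁, hr₁r₂⟩ := EReal.exists_between_coe_real hx₀r₂
  obtain ⟨θ, hθ, hθr⟩ :=
    exists_pos_mul_lt (sub_pos.2 (EReal.coe_lt_coe_iff.1 hr₁r₂)) (dist x₀ x)
  have hf := convex_epigraph hconv
  obtain ⟨x₁, hx₁⟩ := hproper
  obtain ⟨ψ, c, hψ⟩ := exists_affine_le hf (isClosed_epigraph hlsc) hx₁ (hbot x₁)
  obtain ⟨z, v, hv, hz, hvx⟩ := exists_subgradient_mul_dist_le_apply_sub hf hlsc hψ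
    (hx₀r₁.trans (EReal.coe_lt_top _)).ne x hθ
  have hfz : f z < r₂ :=
    calc f z ≤ f z + (θ * dist z x : ℝ) := le_add_of_nonneg_right (by exact_mod_cast by positivity)
      _ ≤ f x₀ + (θ * dist x₀ x : ℝ) := hz
      _ ≤ r₁ + (θ * dist x₀ x : ℝ) := by gcongr
      _ < r₂ := by rw [← EReal.coe_add]; exact_mod_cast by linarith
  have hzx : z ≠ x := by
    rintro rfl
    exact (hfz.trans hr₂x).false
  refine ⟨z, v, (hfz.trans (EReal.coe_lt_top _)).ne, hv, hfz.trans hr₂x, ?_⟩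
  exact lt_of_lt_of_le (by have := dist_pos.2 hzx; positivity) hvx
end
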